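/- arXiv:1010.5963 — 7 statements merged into one kernel-verified Lean document; each statement's English description precedes it below -/
import Mathlib

section
/- (Aitken's formula) Let λ∖μ be a skew shape with |λ∖μ| = N and ℓ(λ) = n rows. Then the number f^{λ∖μ} of skew Young tableaux of shape λ∖μ equals N! · det( 1/(λ_i − μ_j − i + j)! )_{i,j=1..n}, where an entry of the matrix is taken to be 0 whenever λ_i − μ_j − i + j is negative. -/
/-- The number of descents of a word (list of naturals), i.e. the number of
positions `i` (0-indexed) with `l[i] > l[i+1]`. -/
def descents (l : List ℕ) : ℕ :=
  ((List.range (l.length - 1)).filter (fun i => l.getD (i + 1) 0 < l.getD i 0)).length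

/-- `(lam, mu)` is a (canonically represented) skew shape: both are partitions
(weakly decreasing lists of positive integers) with `mu` contained in `lam`. -/
def IsSkewShape (lam mu : List ℕ) : Prop :=
  lam.Pairwise (· ≥ ·) ∧ mu.Pairwise (· ≥ ·) ∧ 0 ∉ lam ∧ 0 ∉ mu ∧
    ∀ i, mu.getD i 0 ≤ lam.getD i 0

/-- The set of cells of the skew shape `lam \ mu` (0-indexed rows/columns). -/
def skewCells (lam mu : List ℕ) : Set (ℕ × ℕ) :=
  {p | p.1 < lam.length ∧ mu.getD p.1 0 ≤ p.2 ∧ p.2 < lam.getD p.1 0}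

/-- `T` is a skew Young tableau (in the decreasing convention) on the skew shape
`lam \ mu`: it vanishes off the shape, it is a bijection from the cells onto
`{1, ..., N}` where `N` is the number of cells, and its entries strictly
decrease along each row and each column. -/
def IsSkewTableau (lam mu : List ℕ) (T : ℕ × ℕ → ℕ) : Prop :=
  (∀ p, p ∉ skewCells lam mu → T p = 0) ∧
  Set.BijOn T (skewCells lam mu) (Set.Icc 1 (lam.sum - mu.sum)) ∧
  (∀ i j, (i, j) ∈ skewCells lam mu → (i, j + 1) ∈ skewCells lam mu →
    T (i, j + 1) < T (i, j)) ∧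
  (∀ i j, (i, j) ∈ skewCells lam mu → (i + 1, j) ∈ skewCells lam mu →
    T (i + 1, j) < T (i, j))


namespace AitkenAux

noncomputable def ent (v : ℤ) : ℚ := if 0 ≤ v then 1 / (Nat.factorial v.toNat : ℚ) else 0

noncomputable def matF (n : ℕ) (L M : ℕ → ℕ) : Matrix (Fin n) (Fin n) ℚ :=
  Matrix.of fun i j => ent ((L i : ℤ) - (M j : ℤ) - (i : ℕ) + (j : ℕ))

lemma ent_neg {v : ℤ} (h : v < 0) : ent v = 0 := by
  unfold ent; rw [if_neg (by omega)]

lemma ent_sub_one (v : ℤ) : ent (v - 1) = (v : ℚ) * ent v := by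
  unfold ent
  rcases lt_trichotomy v 0 with h | h | h
  · rw [if_neg (by omega), if_neg (by omega)]; ring
  · subst h; norm_num
  · rw [if_pos (by omega), if_pos (by omega)]
    have h1 : v.toNat = (v - 1).toNat + 1 := by omega
    have h2 : (((v - 1).toNat : ℚ) + 1) = (v : ℚ) := by
      have h0 := Int.toNat_of_nonneg (show (0:ℤ) ≤ v - 1 by omega)
      have h3 : (((v-1).toNat : ℤ) : ℚ) = ((v - 1 : ℤ) : ℚ) := by rw [h0]
      push_cast at h3 ⊢
      linarith
    have hv : (v : ℚ) ≠ 0 := by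
      have : (0:ℚ) < (v:ℚ) := by exact_mod_cast h
      linarith
    have hf : ((Nat.factorial (v-1).toNat : ℚ)) ≠ 0 := by
      exact_mod_cast Nat.factorial_ne_zero _
    rw [h1, Nat.factorial_succ]
    push_cast
    rw [h2]
    field_simp


open Finset in
lemma sum_det_updateColumn_rowscale (n : ℕ) (A : Matrix (Fin n) (Fin n) ℚ) (a : Fin n → ℚ) :
    ∑ j : Fin n, (A.updateCol j fun r => a r * A r j).det = (∑ r : Fin n, a r) * A.det := by
  simp only [Matrix.det_apply']
  have key : ∀ (j : Fin n) (σ : Equiv.Perm (Fin n)),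
      (∏ i, (A.updateCol j fun r => a r * A r j) (σ i) i) = a (σ j) * ∏ i, A (σ i) i := by
    intro j σ
    have h1 : ∀ i : Fin n, (A.updateCol j fun r => a r * A r j) (σ i) i
        = (if i = j then a (σ i) else 1) * A (σ i) i := by
      intro i
      by_cases h : i = j
      · subst h; rw [Matrix.updateCol_apply, if_pos rfl, if_pos rfl]
      · rw [Matrix.updateCol_apply, if_neg h, if_neg h, one_mul]
    rw [Finset.prod_congr rfl fun i _ => h1 i, Finset.prod_mul_distrib,
      Finset.prod_ite_eq' Finset.univ j (fun i => a (σ i))]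
    simp
  rw [Finset.sum_comm, Finset.mul_sum]
  refine Finset.sum_congr rfl fun σ _ => ?_
  rw [Finset.sum_congr rfl fun j (_ : j ∈ univ) => by rw [key j σ]]
  have hswap : ∑ j : Fin n, a (σ j) = ∑ r : Fin n, a r := Equiv.sum_comp σ a
  rw [← Finset.mul_sum, ← Finset.sum_mul, hswap]
  ring

lemma det_update_shift (n : ℕ) (A : Matrix (Fin n) (Fin n) ℚ) (a : Fin n → ℚ) (b : Fin n → ℚ) :
    ∑ j : Fin n, (A.updateCol j fun r => (a r - b j) * A r j).det
      = ((∑ r : Fin n, a r) - ∑ j : Fin n, b j) * A.det := by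
  have h1 : ∀ j : Fin n, (A.updateCol j fun r => (a r - b j) * A r j).det
      = (A.updateCol j fun r => a r * A r j).det + (-(b j)) * A.det := by
    intro j
    have e : (fun r => (a r - b j) * A r j)
        = (fun r => a r * A r j) + (fun r => -(b j) * A r j) := by
      funext r; simp; ring
    rw [e, Matrix.det_updateCol_add]
    congr 1
    have e2 : (fun r => -(b j) * A r j) = (-(b j)) • (fun r => A r j) := by
      funext r; simp
    rw [e2, Matrix.det_updateCol_smul, Matrix.updateCol_eq_self]
  rw [Finset.sum_congr rfl fun j _ => h1 j, Finset.sum_add_distrib,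
    sum_det_updateColumn_rowscale, ← Finset.sum_mul]
  rw [Finset.sum_neg_distrib]
  ring


lemma det_eq_zero_of_block {n : ℕ} (A : Matrix (Fin n) (Fin n) ℚ) (i : Fin n)
    (h : ∀ r j : Fin n, i ≤ r → j ≤ i → A r j = 0) : A.det = 0 := by
  classical
  set k : ℕ := (i : ℕ) with hk
  -- the family of the first i+1 columns, truncated to the first i rows
  set u : {j : Fin n // j ≤ i} → (Fin k → ℚ) :=
    fun j r => A ⟨r.1, r.2.trans i.2⟩ j.1 with hu
  have hcard : Fintype.card {j : Fin n // j ≤ i} = k + 1 := by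
    have e : {j : Fin n // j ≤ i} ≃ Fin (k + 1) :=
      { toFun := fun j => ⟨j.1.1, Nat.lt_succ_of_le j.2⟩
        invFun := fun m => ⟨⟨m.1, lt_of_le_of_lt (Nat.lt_succ_iff.mp m.2) i.2⟩,
          by exact Fin.mk_le_mk.mpr (Nat.lt_succ_iff.mp m.2)⟩
        left_inv := fun j => by ext; rfl
        right_inv := fun m => by ext; rfl }
    rw [Fintype.card_congr e, Fintype.card_fin]
  have hnotli : ¬ LinearIndependent ℚ u := by
    intro hli
    have := hli.fintype_card_le_finrank
    rw [hcard, Module.finrank_pi] at this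
    simp at this
  obtain ⟨g, hg0, j0, hgj0⟩ := Fintype.not_linearIndependent_iff.mp hnotli
  set v : Fin n → ℚ := fun j => if hj : j ≤ i then g ⟨j, hj⟩ else 0 with hv
  rw [← Matrix.exists_mulVec_eq_zero_iff]
  refine ⟨v, ?_, ?_⟩
  · intro hv0
    apply hgj0
    have := congrFun hv0 j0.1
    simpa [hv, j0.2] using this
  · funext r
    show ∑ j, A r j * v j = 0
    have hsplit : ∑ j, A r j * v j = ∑ j : {j : Fin n // j ≤ i}, A r j.1 * g j := by
      have e0 : ∀ j : Fin n, A r j * v j = if j ≤ i then A r j * v j else 0 := fun j => by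
        by_cases hj : j ≤ i <;> simp [hv, hj]
      rw [Finset.sum_congr rfl fun j (_ : j ∈ Finset.univ) => e0 j, ← Finset.sum_filter]
      rw [Finset.sum_subtype (p := fun j : Fin n => j ≤ i)
        (Finset.univ.filter (fun j : Fin n => j ≤ i)) (fun j => by simp) (fun j => A r j * v j)]
      refine Finset.sum_congr rfl fun j _ => ?_
      simp [hv, j.2]
    rcases le_or_gt i r with hr | hr
    · rw [hsplit]
      refine Finset.sum_eq_zero fun j _ => ?_
      rw [h r j.1 hr j.2, zero_mul]
    · have hrk : (r : ℕ) < k := hr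
      have := congrFun hg0 (⟨r.1, hrk⟩ : Fin k)
      rw [hsplit]
      rw [Finset.sum_congr rfl fun j (_ : j ∈ Finset.univ) => mul_comm (A r j.1) (g j)]
      simpa [hu, Fin.ext_iff] using this

open Finset in
lemma matF_update_eq (n : ℕ) (L M : ℕ → ℕ) (j : Fin n) :
    matF n L (Function.update M (j : ℕ) (M (j : ℕ) + 1))
      = (matF n L M).updateCol j
          (fun r => ((((L (r:ℕ) : ℚ) - ((r:ℕ) : ℚ))) - (((M (j:ℕ) : ℚ) - ((j:ℕ) : ℚ)))) * matF n L M r j) := by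
  ext r c
  by_cases hc : c = j
  · subst hc
    rw [Matrix.updateCol_apply, if_pos rfl]
    show ent ((L (r:ℕ) : ℤ) - (Function.update M (c:ℕ) (M (c:ℕ) + 1) (c:ℕ) : ℤ) - ((r:ℕ):ℤ) + ((c:ℕ):ℤ)) = _
    rw [Function.update_self]
    have e1 : (L (r:ℕ) : ℤ) - ((M (c:ℕ) + 1 : ℕ) : ℤ) - ((r:ℕ):ℤ) + ((c:ℕ):ℤ)
        = ((L (r:ℕ) : ℤ) - (M (c:ℕ) : ℤ) - ((r:ℕ):ℤ) + ((c:ℕ):ℤ)) - 1 := by push_cast; ring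
    rw [e1, ent_sub_one]
    have e2 : (((L (r:ℕ) : ℤ) - (M (c:ℕ) : ℤ) - ((r:ℕ):ℤ) + ((c:ℕ):ℤ) : ℤ) : ℚ)
        = (((L (r:ℕ) : ℚ) - ((r:ℕ) : ℚ)) - (((M (c:ℕ) : ℚ) - ((c:ℕ) : ℚ)))) := by push_cast; ring
    rw [e2]
    rfl
  · rw [Matrix.updateCol_apply, if_neg hc]
    show ent ((L (r:ℕ) : ℤ) - (Function.update M (j:ℕ) (M (j:ℕ) + 1) (c:ℕ) : ℤ) - ((r:ℕ):ℤ) + ((c:ℕ):ℤ)) = _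
    rw [Function.update_of_ne (fun hh => hc (Fin.ext hh))]
    rfl

open Finset in
lemma det_sum (n : ℕ) (L M : ℕ → ℕ) :
    ∑ j : Fin n, (matF n L (Function.update M (j : ℕ) (M (j : ℕ) + 1))).det
      = (∑ i ∈ Finset.range n, ((L i : ℚ) - (M i : ℚ))) * (matF n L M).det := by
  rw [Finset.sum_congr rfl fun j (_ : j ∈ univ) => by rw [matF_update_eq n L M j]]
  rw [det_update_shift n (matF n L M) (fun r => (L (r:ℕ) : ℚ) - ((r:ℕ) : ℚ))
    (fun j => (M (j:ℕ) : ℚ) - ((j:ℕ) : ℚ))]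
  congr 1
  rw [← Finset.sum_sub_distrib]
  rw [← Fin.sum_univ_eq_sum_range (fun i => ((L i : ℚ) - (M i : ℚ))) n]
  refine Finset.sum_congr rfl fun r _ => ?_
  ring


def Dec (f : ℕ → ℕ) : Prop := ∀ i j : ℕ, i ≤ j → f j ≤ f i

def Corner (L M : ℕ → ℕ) (i : ℕ) : Prop := M i < L i ∧ ∀ k, k < i → M i < M k

def cellsF (L M : ℕ → ℕ) : Set (ℕ × ℕ) := {p | M p.1 ≤ p.2 ∧ p.2 < L p.1}

def TabF (N : ℕ) (L M : ℕ → ℕ) (T : ℕ × ℕ → ℕ) : Prop :=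
  (∀ p, p ∉ cellsF L M → T p = 0) ∧
  Set.BijOn T (cellsF L M) (Set.Icc 1 N) ∧
  (∀ i j, (i, j) ∈ cellsF L M → (i, j + 1) ∈ cellsF L M → T (i, j + 1) < T (i, j)) ∧
  (∀ i j, (i, j) ∈ cellsF L M → (i + 1, j) ∈ cellsF L M → T (i + 1, j) < T (i, j))

lemma cells_update (L M : ℕ → ℕ) (i : ℕ) :
    cellsF L (Function.update M i (M i + 1)) = cellsF L M \ {(i, M i)} := by
  ext ⟨r, c⟩
  simp only [cellsF, Set.mem_setOf_eq, Set.mem_diff, Set.mem_singleton_iff, Prod.mk.injEq]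
  by_cases hr : r = i
  · subst hr
    rw [Function.update_self]
    omega
  · rw [Function.update_of_ne hr]
    have : ¬ (r = i ∧ c = M i) := fun hh => hr hh.1
    tauto

lemma cells_finite {L M : ℕ → ℕ} {n : ℕ} (hL : Dec L) (hsupp : ∀ i, n ≤ i → L i = 0) :
    (cellsF L M).Finite := by
  apply Set.Finite.subset ((Set.finite_Iio n).prod (Set.finite_Iio (L 0)))
  rintro ⟨r, c⟩ ⟨h1, h2⟩
  constructor
  · show r < n
    by_contra hr
    rw [hsupp r (le_of_not_gt hr)] at h2
    omega
  · exact lt_of_lt_of_le h2 (hL 0 r (Nat.zero_le r))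

lemma tab_finite {L M : ℕ → ℕ} {n : ℕ} (hL : Dec L) (hsupp : ∀ i, n ≤ i → L i = 0) (N : ℕ) :
    Finite {T : ℕ × ℕ → ℕ // TabF N L M T} := by
  have hfin : (cellsF L M).Finite := cells_finite hL hsupp
  haveI := hfin.to_subtype
  refine Finite.of_injective
    (fun T : {T : ℕ × ℕ → ℕ // TabF N L M T} =>
      (fun p : cellsF L M => (⟨T.1 p, Nat.lt_succ_of_le (T.2.2.1.1 p.2).2⟩ : Fin (N + 1)))) ?_
  intro T S hTS
  apply Subtype.ext
  funext p
  by_cases hp : p ∈ cellsF L M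
  · have := congrFun hTS ⟨p, hp⟩
    simpa using this
  · rw [T.2.1 p hp, S.2.1 p hp]

lemma maxcell {L M : ℕ → ℕ} (hL : Dec L) (hM : Dec M) {N : ℕ} {T : ℕ × ℕ → ℕ}
    (hT : TabF (N + 1) L M T) {r c : ℕ} (hp : (r, c) ∈ cellsF L M) (hpv : T (r, c) = N + 1) :
    c = M r ∧ Corner L M r := by
  obtain ⟨hp1, hp2⟩ := hp
  simp only at hp1 hp2
  have hc : c = M r := by
    by_contra hne
    have h1 : M r < c := lt_of_le_of_ne hp1 (Ne.symm hne)
    have hcell : (r, c - 1) ∈ cellsF L M := ⟨show M r ≤ c - 1 by omega, show c - 1 < L r by omega⟩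
    have hrow := hT.2.2.1 r (c - 1) hcell (by
      have e : c - 1 + 1 = c := by omega
      rw [e]; exact ⟨hp1, hp2⟩)
    have e : c - 1 + 1 = c := by omega
    rw [e, hpv] at hrow
    have hmem := hT.2.1.1 hcell
    have := hmem.2
    omega
  refine ⟨hc, by omega, ?_⟩
  intro k hk
  by_contra hle
  push_neg at hle
  have h1 : M (r - 1) ≤ M k := hM k (r - 1) (by omega)
  have h2 : M r ≤ M (r - 1) := hM (r - 1) r (by omega)
  have hcell : (r - 1, c) ∈ cellsF L M :=
    ⟨show M (r-1) ≤ c by omega, show c < L (r-1) from lt_of_lt_of_le hp2 (hL (r - 1) r (by omega))⟩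
  have hcol := hT.2.2.2 (r - 1) c hcell (by
    have e : r - 1 + 1 = r := by omega
    rw [e]; exact ⟨hp1, hp2⟩)
  have e : r - 1 + 1 = r := by omega
  rw [e, hpv] at hcol
  have hmem := hT.2.1.1 hcell
  have := hmem.2
  omega


lemma tab_erase {L M : ℕ → ℕ} {N : ℕ} {T : ℕ × ℕ → ℕ} {i : ℕ}
    (hT : TabF (N + 1) L M T) (hc : (i, M i) ∈ cellsF L M) (hv : T (i, M i) = N + 1) :
    TabF N L (Function.update M i (M i + 1)) (Function.update T (i, M i) 0) := by
  set c : ℕ × ℕ := (i, M i) with hcdef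
  have hcells := cells_update L M i
  refine ⟨?_, ⟨?_, ?_, ?_⟩, ?_, ?_⟩
  · intro p hp
    rw [hcells] at hp
    by_cases hpc : p = c
    · rw [hpc, Function.update_self]
    · rw [Function.update_of_ne hpc]
      refine hT.1 p ?_
      intro hmem
      exact hp ⟨hmem, hpc⟩
  · intro p hp
    rw [hcells] at hp
    rw [Function.update_of_ne hp.2]
    have h1 := hT.2.1.1 hp.1
    have h2 : T p ≠ N + 1 := by
      intro hh
      exact hp.2 (hT.2.1.2.1 hp.1 hc (by rw [hh, hv]))
    have := h1.1; have := h1.2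
    exact ⟨by omega, by omega⟩
  · intro p hp q hq hpq
    rw [hcells] at hp hq
    rw [Function.update_of_ne hp.2, Function.update_of_ne hq.2] at hpq
    exact hT.2.1.2.1 hp.1 hq.1 hpq
  · intro x hx
    have hx' : x ∈ Set.Icc 1 (N + 1) := ⟨hx.1, by have := hx.2; omega⟩
    obtain ⟨p, hp, hTp⟩ := hT.2.1.2.2 hx'
    have hpc : p ≠ c := by
      intro hh
      rw [hh, hv] at hTp
      have := hx.2
      omega
    refine ⟨p, ?_, ?_⟩
    · rw [hcells]; exact ⟨hp, hpc⟩
    · rw [Function.update_of_ne hpc]; exact hTp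
  · intro a b h1 h2
    rw [hcells] at h1 h2
    rw [Function.update_of_ne h1.2, Function.update_of_ne h2.2]
    exact hT.2.2.1 a b h1.1 h2.1
  · intro a b h1 h2
    rw [hcells] at h1 h2
    rw [Function.update_of_ne h1.2, Function.update_of_ne h2.2]
    exact hT.2.2.2 a b h1.1 h2.1

lemma tab_extend {L M : ℕ → ℕ} {N : ℕ} {T' : ℕ × ℕ → ℕ} {i : ℕ}
    (hcor : Corner L M i) (hT' : TabF N L (Function.update M i (M i + 1)) T') :
    TabF (N + 1) L M (Function.update T' (i, M i) (N + 1)) := by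
  set c : ℕ × ℕ := (i, M i) with hcdef
  have hcells := cells_update L M i
  have hcmem : c ∈ cellsF L M := ⟨le_refl _, hcor.1⟩
  have hcnot : c ∉ cellsF L (Function.update M i (M i + 1)) := by
    rw [hcells]; exact fun hh => hh.2 rfl
  refine ⟨?_, ⟨?_, ?_, ?_⟩, ?_, ?_⟩
  · intro p hp
    have hpc : p ≠ c := fun hh => hp (hh ▸ hcmem)
    rw [Function.update_of_ne hpc]
    refine hT'.1 p ?_
    rw [hcells]
    exact fun hh => hp hh.1
  · intro p hp
    by_cases hpc : p = c
    · rw [hpc, Function.update_self]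
      exact ⟨by omega, le_refl _⟩
    · rw [Function.update_of_ne hpc]
      have h1 := hT'.2.1.1 (by rw [hcells]; exact ⟨hp, hpc⟩)
      exact ⟨h1.1, by have := h1.2; omega⟩
  · intro p hp q hq hpq
    by_cases hpc : p = c <;> by_cases hqc : q = c
    · rw [hpc, hqc]
    · rw [hpc, Function.update_self, Function.update_of_ne hqc] at hpq
      have := (hT'.2.1.1 (by rw [hcells]; exact ⟨hq, hqc⟩)).2
      omega
    · rw [hqc, Function.update_self, Function.update_of_ne hpc] at hpq
      have := (hT'.2.1.1 (by rw [hcells]; exact ⟨hp, hpc⟩)).2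
      omega
    · rw [Function.update_of_ne hpc, Function.update_of_ne hqc] at hpq
      exact hT'.2.1.2.1 (by rw [hcells]; exact ⟨hp, hpc⟩) (by rw [hcells]; exact ⟨hq, hqc⟩) hpq
  · intro x hx
    by_cases hxN : x = N + 1
    · exact ⟨c, hcmem, by rw [Function.update_self, hxN]⟩
    · have hx' : x ∈ Set.Icc 1 N := ⟨hx.1, by have := hx.2; omega⟩
      obtain ⟨p, hp, hTp⟩ := hT'.2.1.2.2 hx'
      rw [hcells] at hp
      exact ⟨p, hp.1, by rw [Function.update_of_ne hp.2]; exact hTp⟩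
  · intro a b h1 h2
    by_cases hc1 : ((a, b) : ℕ × ℕ) = c
    · have hc2 : ((a, b + 1) : ℕ × ℕ) ≠ c := by
        intro hh
        rw [Prod.ext_iff] at hc1 hh
        simp only at hc1 hh
        omega
      rw [hc1, Function.update_self, Function.update_of_ne hc2]
      have := (hT'.2.1.1 (by rw [hcells]; exact ⟨h2, hc2⟩)).2
      omega
    · by_cases hc2 : ((a, b + 1) : ℕ × ℕ) = c
      · exfalso
        rw [Prod.ext_iff] at hc2
        simp only at hc2
        obtain ⟨ha, hb⟩ := hc2
        subst ha
        have hm : M a ≤ b := h1.1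
        simp only [hcdef] at hm hb
        omega
      · rw [Function.update_of_ne hc1, Function.update_of_ne hc2]
        exact hT'.2.2.1 a b (by rw [hcells]; exact ⟨h1, hc1⟩) (by rw [hcells]; exact ⟨h2, hc2⟩)
  · intro a b h1 h2
    by_cases hc1 : ((a, b) : ℕ × ℕ) = c
    · have hc2 : ((a + 1, b) : ℕ × ℕ) ≠ c := by
        intro hh
        rw [Prod.ext_iff] at hc1 hh
        simp only at hc1 hh
        omega
      rw [hc1, Function.update_self, Function.update_of_ne hc2]
      have := (hT'.2.1.1 (by rw [hcells]; exact ⟨h2, hc2⟩)).2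
      omega
    · by_cases hc2 : ((a + 1, b) : ℕ × ℕ) = c
      · exfalso
        rw [Prod.ext_iff] at hc2
        simp only at hc2
        have hm := h1.1
        simp only at hm
        -- (a, b) = (i - 1, M i) is above c, contradicting the corner condition
        have : M a ≤ b := hm
        have ha : a + 1 = i := hc2.1
        have hb : b = M i := hc2.2
        have := hcor.2 a (by omega)
        omega
      · rw [Function.update_of_ne hc1, Function.update_of_ne hc2]
        exact hT'.2.2.2 a b (by rw [hcells]; exact ⟨h1, hc1⟩) (by rw [hcells]; exact ⟨h2, hc2⟩)


open Finset in
lemma card_step (n N : ℕ) (L M : ℕ → ℕ) (hL : Dec L) (hM : Dec M)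
    (hsupp : ∀ i, n ≤ i → L i = 0)
    (C : Finset (Fin n)) (hC : ∀ i : Fin n, i ∈ C ↔ Corner L M (i : ℕ)) :
    Nat.card {T : ℕ × ℕ → ℕ // TabF (N + 1) L M T}
      = ∑ i ∈ C, Nat.card {T : ℕ × ℕ → ℕ //
          TabF N L (Function.update M (i : ℕ) (M (i : ℕ) + 1)) T} := by
  classical
  have key : ∀ T : {T : ℕ × ℕ → ℕ // TabF (N + 1) L M T},
      ∃ p : ℕ × ℕ, p ∈ cellsF L M ∧ T.1 p = N + 1 := by
    intro T
    obtain ⟨p, hp, hTp⟩ := T.2.2.1.2.2 (Set.mem_Icc.mpr ⟨by omega, le_refl _⟩)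
    exact ⟨p, hp, hTp⟩
  choose pc hpcmem hpcval using key
  have hpc2 : ∀ T, (pc T).2 = M (pc T).1 ∧ Corner L M (pc T).1 := by
    intro T
    have he : ((pc T).1, (pc T).2) = pc T := rfl
    exact maxcell hL hM T.2 (by rw [he]; exact hpcmem T) (by rw [he]; exact hpcval T)
  have hpclt : ∀ T, (pc T).1 < n := by
    intro T
    have h2 : (pc T).2 < L (pc T).1 := (hpcmem T).2
    by_contra hlt
    rw [hsupp _ (le_of_not_gt hlt)] at h2
    omega
  have hpceq : ∀ T, pc T = ((pc T).1, M (pc T).1) := by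
    intro T
    rw [← (hpc2 T).1]
  have hmem' : ∀ T, ((pc T).1, M (pc T).1) ∈ cellsF L M := fun T => by
    rw [← hpceq T]; exact hpcmem T
  have hval' : ∀ T : {T : ℕ × ℕ → ℕ // TabF (N + 1) L M T},
      T.1 ((pc T).1, M (pc T).1) = N + 1 := fun T => by
    rw [← hpceq T]; exact hpcval T
  have E : {T : ℕ × ℕ → ℕ // TabF (N + 1) L M T}
      ≃ Σ i : {i : Fin n // i ∈ C}, {T : ℕ × ℕ → ℕ //
          TabF N L (Function.update M ((i.1 : Fin n) : ℕ) (M ((i.1 : Fin n) : ℕ) + 1)) T} :=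
    { toFun := fun T => ⟨⟨⟨(pc T).1, hpclt T⟩, (hC ⟨(pc T).1, hpclt T⟩).mpr (hpc2 T).2⟩,
        ⟨Function.update T.1 ((pc T).1, M (pc T).1) 0,
          tab_erase T.2 (hmem' T) (hval' T)⟩⟩
      invFun := fun x => ⟨Function.update x.2.1 ((x.1.1 : ℕ), M (x.1.1 : ℕ)) (N + 1),
          tab_extend ((hC x.1.1).mp x.1.2) x.2.2⟩
      left_inv := by
        intro T
        apply Subtype.ext
        funext q
        show Function.update (Function.update T.1 ((pc T).1, M (pc T).1) 0)
          ((pc T).1, M (pc T).1) (N + 1) q = T.1 q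
        by_cases hq : q = ((pc T).1, M (pc T).1)
        · rw [hq, Function.update_self, hval' T]
        · rw [Function.update_of_ne hq, Function.update_of_ne hq]
      right_inv := by
        rintro ⟨⟨i, hi⟩, T', hT'⟩
        have hcor : Corner L M (i : ℕ) := (hC i).mp hi
        set c : ℕ × ℕ := ((i : ℕ), M (i : ℕ)) with hcdef
        set t : {T : ℕ × ℕ → ℕ // TabF (N + 1) L M T} :=
          ⟨Function.update T' c (N + 1), tab_extend hcor hT'⟩ with htdef
        have h1 : pc t = c := by
          have hcmem : c ∈ cellsF L M := ⟨le_refl _, hcor.1⟩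
          have htc : t.1 c = N + 1 := Function.update_self _ _ _
          exact t.2.2.1.2.1 (hpcmem t) hcmem (by rw [hpcval t, htc])
        have h1' : (pc t).1 = (i : ℕ) := by rw [h1]
        refine Sigma.ext ?_ ?_
        · apply Subtype.ext
          apply Fin.ext
          exact h1'
        · refine (Subtype.heq_iff_coe_eq ?_).mpr ?_
          · intro x
            show TabF N L (Function.update M (pc t).1 (M (pc t).1 + 1)) x
              ↔ TabF N L (Function.update M (i : ℕ) (M (i : ℕ) + 1)) x
            rw [h1']
          · funext q
            have hcell : (((pc t).1, M (pc t).1) : ℕ × ℕ) = c := by rw [h1']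
            show Function.update t.1 ((pc t).1, M (pc t).1) 0 q = T' q
            rw [hcell]
            by_cases hq : q = c
            · rw [hq, Function.update_self]
              have h0 : T' c = 0 := hT'.1 c (by
                rw [cells_update]; exact fun hh => hh.2 rfl)
              rw [h0]
            · rw [Function.update_of_ne hq]
              show Function.update T' c (N + 1) q = T' q
              rw [Function.update_of_ne hq] }
  rw [Nat.card_congr E]
  haveI hfib : ∀ i : {i : Fin n // i ∈ C}, Finite {T : ℕ × ℕ → ℕ //
      TabF N L (Function.update M ((i.1 : Fin n) : ℕ) (M ((i.1 : Fin n) : ℕ) + 1)) T} :=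
    fun i => tab_finite hL hsupp N
  letI : ∀ i : {i : Fin n // i ∈ C}, Fintype {T : ℕ × ℕ → ℕ //
      TabF N L (Function.update M ((i.1 : Fin n) : ℕ) (M ((i.1 : Fin n) : ℕ) + 1)) T} :=
    fun i => Fintype.ofFinite _
  rw [Nat.card_eq_fintype_card, Fintype.card_sigma]
  rw [← Finset.sum_coe_sort C (fun i => Nat.card {T : ℕ × ℕ → ℕ //
      TabF N L (Function.update M (i : ℕ) (M (i : ℕ) + 1)) T})]
  exact Finset.sum_congr rfl fun i _ => Nat.card_eq_fintype_card.symm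


lemma dec_update {M : ℕ → ℕ} {i : ℕ} (hM : Dec M) (hcor : ∀ k, k < i → M i < M k) :
    Dec (Function.update M i (M i + 1)) := by
  intro a b hab
  by_cases ha : a = i <;> by_cases hb : b = i
  · subst ha; subst hb; exact le_refl _
  · subst ha
    rw [Function.update_self, Function.update_of_ne hb]
    have := hM a b hab
    omega
  · subst hb
    rw [Function.update_self, Function.update_of_ne ha]
    have := hcor a (by omega)
    omega
  · rw [Function.update_of_ne ha, Function.update_of_ne hb]
    exact hM a b hab

open Finset in
lemma det_noncorner {n : ℕ} {L M : ℕ → ℕ} (hL : Dec L) (hM : Dec M) (hML : ∀ k, M k ≤ L k)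
    (i : Fin n) (hnc : ¬ Corner L M (i : ℕ)) :
    (matF n L (Function.update M (i : ℕ) (M (i : ℕ) + 1))).det = 0 := by
  unfold Corner at hnc
  push_neg at hnc
  by_cases h1 : M (i : ℕ) < L (i : ℕ)
  · -- duplicate column case : ∃ k < i, M k ≤ M i, hence M (i-1) = M i
    obtain ⟨k, hk, hle⟩ := hnc h1
    have hi1 : 0 < (i : ℕ) := by omega
    have hMeq : M ((i : ℕ) - 1) = M (i : ℕ) := by
      have h2 : M ((i : ℕ) - 1) ≤ M k := hM k ((i : ℕ) - 1) (by omega)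
      have h3 : M (i : ℕ) ≤ M ((i : ℕ) - 1) := hM ((i : ℕ) - 1) (i : ℕ) (by omega)
      omega
    set j : Fin n := ⟨(i : ℕ) - 1, by omega⟩ with hj
    apply Matrix.det_zero_of_column_eq (i := j) (j := i)
    · intro hh
      have := congrArg Fin.val hh
      simp [hj] at this
      omega
    · intro r
      show ent _ = ent _
      congr 1
      have e1 : Function.update M (i : ℕ) (M (i : ℕ) + 1) ((j : Fin n) : ℕ)
          = M (i : ℕ) := by
        rw [Function.update_of_ne (by simp [hj]; omega)]
        exact hMeq
      have e2 : Function.update M (i : ℕ) (M (i : ℕ) + 1) ((i : Fin n) : ℕ)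
          = M (i : ℕ) + 1 := Function.update_self _ _ _
      rw [e1, e2]
      have : ((j : Fin n) : ℕ) = (i : ℕ) - 1 := rfl
      rw [this]
      push_cast
      omega
  · -- blocked case : M i = L i
    have hMi : M (i : ℕ) = L (i : ℕ) := by have := hML (i : ℕ); omega
    apply det_eq_zero_of_block _ i
    intro r j hir hji
    have hirv : (i : ℕ) ≤ (r : ℕ) := hir
    have hjiv : (j : ℕ) ≤ (i : ℕ) := hji
    show ent _ = 0
    apply ent_neg
    have hLr : L (r : ℕ) ≤ L (i : ℕ) := hL (i : ℕ) (r : ℕ) hirv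
    by_cases hj : (j : ℕ) = (i : ℕ)
    · rw [hj, Function.update_self]
      omega
    · rw [Function.update_of_ne hj]
      have hMj : M (i : ℕ) ≤ M (j : ℕ) := hM (j : ℕ) (i : ℕ) hjiv
      omega


open Finset in
lemma count (N : ℕ) : ∀ (n : ℕ) (L M : ℕ → ℕ), Dec L → Dec M → (∀ i, M i ≤ L i) →
    (∀ i, n ≤ i → L i = 0) → (∑ i ∈ Finset.range n, (L i - M i)) = N →
    (Nat.card {T : ℕ × ℕ → ℕ // TabF N L M T} : ℚ)
      = (N.factorial : ℚ) * (matF n L M).det := by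
  induction N with
  | zero =>
    intro n L M hL hM hML hsupp hN
    have hLM : ∀ i, M i = L i := by
      intro i
      by_cases hi : i < n
      · have h0 : L i - M i = 0 := Finset.sum_eq_zero_iff.mp hN i (Finset.mem_range.mpr hi)
        have := hML i
        omega
      · have := hsupp i (le_of_not_gt hi)
        have := hML i
        omega
    have hcells : cellsF L M = ∅ := by
      ext ⟨r, c⟩
      simp only [cellsF, Set.mem_setOf_eq, Set.mem_empty_iff_false, iff_false]
      rw [hLM r]
      omega
    have htab0 : TabF 0 L M (fun _ => 0) := by
      refine ⟨fun p _ => rfl, ?_, ?_, ?_⟩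
      · rw [hcells, Set.Icc_eq_empty (by omega)]
        exact Set.bijOn_empty _
      · intro a b h1 _
        rw [hcells] at h1
        exact absurd h1 (Set.notMem_empty _)
      · intro a b h1 _
        rw [hcells] at h1
        exact absurd h1 (Set.notMem_empty _)
    haveI : Unique {T : ℕ × ℕ → ℕ // TabF 0 L M T} :=
      { default := ⟨fun _ => 0, htab0⟩
        uniq := fun T => Subtype.ext (funext fun p =>
          T.2.1 p (by rw [hcells]; exact Set.notMem_empty p)) }
    rw [Nat.card_unique]
    have hdet : (matF n L M).det = 1 := by
      have htri : (matF n L M).BlockTriangular id := by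
        intro a b hab
        show ent _ = 0
        apply ent_neg
        have h1 : (b : ℕ) < (a : ℕ) := hab
        have h2 : L (a : ℕ) ≤ L (b : ℕ) := hL (b : ℕ) (a : ℕ) (by omega)
        rw [hLM (b : ℕ)]
        omega
      rw [Matrix.det_of_upperTriangular htri]
      have hdiag : ∀ a : Fin n, matF n L M a a = 1 := by
        intro a
        show ent _ = 1
        have he : (L (a : ℕ) : ℤ) - (M (a : ℕ) : ℤ) - ((a : ℕ) : ℤ) + ((a : ℕ) : ℤ) = 0 := by
          rw [hLM (a : ℕ)]; ring
        rw [he]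
        unfold ent
        norm_num
      rw [Finset.prod_congr rfl fun a _ => hdiag a, Finset.prod_const_one]
    rw [hdet, Nat.factorial_zero]
    norm_num
  | succ N ih =>
    intro n L M hL hM hML hsupp hN
    classical
    set C : Finset (Fin n) := Finset.univ.filter (fun i : Fin n => Corner L M (i : ℕ)) with hCdef
    have hC : ∀ i : Fin n, i ∈ C ↔ Corner L M (i : ℕ) := by
      intro i; simp [hCdef]
    rw [card_step n N L M hL hM hsupp C hC]
    push_cast
    have hterm : ∀ i ∈ C,
        (Nat.card {T : ℕ × ℕ → ℕ // TabF N L (Function.update M (i : ℕ) (M (i : ℕ) + 1)) T} : ℚ)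
          = (N.factorial : ℚ) * (matF n L (Function.update M (i : ℕ) (M (i : ℕ) + 1))).det := by
      intro i hi
      have hcor := (hC i).mp hi
      have hin : (i : ℕ) < n := i.2
      refine ih n L _ hL (dec_update hM hcor.2) ?_ hsupp ?_
      · intro k
        by_cases hk : k = (i : ℕ)
        · subst hk; rw [Function.update_self]; exact hcor.1
        · rw [Function.update_of_ne hk]; exact hML k
      · have hfun : ∀ k, L k - Function.update M (i : ℕ) (M (i : ℕ) + 1) k
            = Function.update (fun k => L k - M k) (i : ℕ) (L (i : ℕ) - (M (i : ℕ) + 1)) k := by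
          intro k
          by_cases hk : k = (i : ℕ)
          · subst hk; rw [Function.update_self, Function.update_self]
          · rw [Function.update_of_ne hk, Function.update_of_ne hk]
        rw [Finset.sum_congr rfl fun k _ => hfun k]
        rw [Finset.sum_update_of_mem (Finset.mem_range.mpr hin)]
        have h2 : (L (i : ℕ) - M (i : ℕ)) + ∑ x ∈ (Finset.range n).erase (i : ℕ), (L x - M x)
            = ∑ x ∈ Finset.range n, (L x - M x) :=
          Finset.add_sum_erase (Finset.range n) (fun k => L k - M k) (Finset.mem_range.mpr hin)
        rw [Finset.sdiff_singleton_eq_erase]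
        have h3 := hcor.1
        omega
    rw [Finset.sum_congr rfl hterm]
    have hext : ∑ i ∈ C, (N.factorial : ℚ) * (matF n L (Function.update M (i : ℕ) (M (i : ℕ) + 1))).det
        = ∑ i : Fin n, (N.factorial : ℚ) * (matF n L (Function.update M (i : ℕ) (M (i : ℕ) + 1))).det := by
      refine Finset.sum_subset (Finset.subset_univ C) ?_
      intro i _ hiC
      rw [det_noncorner hL hM hML i (by rw [← hC i]; exact hiC), mul_zero]
    rw [hext, ← Finset.mul_sum, det_sum n L M]
    have hcast : (∑ k ∈ Finset.range n, ((L k : ℚ) - (M k : ℚ))) = ((N : ℚ) + 1) := by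
      have hc2 : ∀ k ∈ Finset.range n, ((L k : ℚ) - (M k : ℚ)) = ((L k - M k : ℕ) : ℚ) := by
        intro k _
        rw [Nat.cast_sub (hML k)]
      rw [Finset.sum_congr rfl hc2, ← Nat.cast_sum, hN]
      push_cast
      ring
    rw [hcast, Nat.factorial_succ]
    push_cast
    ring


lemma sum_getD (l : List ℕ) : ∑ i ∈ Finset.range l.length, l.getD i 0 = l.sum := by
  induction l with
  | nil => simp
  | cons a t ih =>
    rw [List.length_cons, Finset.sum_range_succ']
    simp only [List.getD_cons_succ, List.getD_cons_zero, List.sum_cons]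
    rw [ih]
    omega

lemma dec_of_sorted (l : List ℕ) (h : l.Pairwise (· ≥ ·)) : Dec (fun i => l.getD i 0) := by
  intro i j hij
  by_cases hj : j < l.length
  · rcases eq_or_lt_of_le hij with rfl | hlt
    · exact le_refl _
    · show l.getD j 0 ≤ l.getD i 0
      rw [List.getD_eq_getElem l 0 hj, List.getD_eq_getElem l 0 (by omega)]
      exact List.pairwise_iff_getElem.mp h i j (by omega) hj hlt
  · show l.getD j 0 ≤ l.getD i 0
    rw [List.getD_eq_default l 0 (le_of_not_gt hj)]
    exact Nat.zero_le _

end AitkenAux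




/-- Aitken's formula: the number of skew Young tableaux of shape `lam \ mu`,
with `|lam \ mu| = N` and `n` rows, equals
`N! * det(1 / (lam_i - mu_j - i + j)!)`, where an entry of the matrix is `0`
whenever `lam_i - mu_j - i + j` is negative. -/
theorem aitken (lam mu : List ℕ) (h : IsSkewShape lam mu) (n N : ℕ)
    (hn : lam.length = n) (hN : lam.sum - mu.sum = N) :
    (Nat.card {T : ℕ × ℕ → ℕ // IsSkewTableau lam mu T} : ℚ) =
      (N.factorial : ℚ) *
        Matrix.det (Matrix.of fun i j : Fin n =>
          if 0 ≤ (lam.getD i 0 : ℤ) - (mu.getD j 0 : ℤ) - (i : ℤ) + (j : ℤ) then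
            (1 : ℚ) / (Nat.factorial
              ((lam.getD i 0 : ℤ) - (mu.getD j 0 : ℤ) - (i : ℤ) + (j : ℤ)).toNat : ℚ)
          else 0) := by
  classical
  obtain ⟨hslam, hsmu, h0lam, h0mu, hle⟩ := h
  subst hn
  subst hN
  set L : ℕ → ℕ := fun i => lam.getD i 0 with hLdef
  set M : ℕ → ℕ := fun i => mu.getD i 0 with hMdef
  have hL : AitkenAux.Dec L := AitkenAux.dec_of_sorted lam hslam
  have hM : AitkenAux.Dec M := AitkenAux.dec_of_sorted mu hsmu
  have hML : ∀ i, M i ≤ L i := hle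
  have hsupp : ∀ i, lam.length ≤ i → L i = 0 := fun i hi => List.getD_eq_default lam 0 hi
  have hmulen : mu.length ≤ lam.length := by
    by_contra hlen
    push_neg at hlen
    have h2 : L lam.length = 0 := hsupp _ (le_refl _)
    have h1 : M lam.length = 0 := by
      have h4 : M lam.length ≤ L lam.length := hML lam.length
      omega
    have h3 : M lam.length = mu[lam.length] := List.getD_eq_getElem mu 0 hlen
    exact h0mu (by rw [← h3.symm.trans h1]; exact List.getElem_mem hlen)
  have hsumM : ∑ i ∈ Finset.range lam.length, M i = mu.sum := by
    rw [← AitkenAux.sum_getD mu]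
    refine (Finset.sum_subset (Finset.range_subset_range.mpr hmulen) ?_).symm
    intro x _ hnx
    exact List.getD_eq_default mu 0 (by simp at hnx; omega)
  have hsum : ∑ i ∈ Finset.range lam.length, (L i - M i) = lam.sum - mu.sum := by
    rw [Finset.sum_tsub_distrib (Finset.range lam.length) (fun x _ => hML x)]
    rw [hsumM]
    congr 1
    exact AitkenAux.sum_getD lam
  have hcells : skewCells lam mu = AitkenAux.cellsF L M := by
    ext ⟨r, c⟩
    simp only [skewCells, AitkenAux.cellsF, Set.mem_setOf_eq]
    constructor
    · rintro ⟨h1, h2, h3⟩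
      exact ⟨h2, h3⟩
    · rintro ⟨h2, h3⟩
      refine ⟨?_, h2, h3⟩
      by_contra hr
      rw [show L r = 0 from hsupp r (le_of_not_gt hr)] at h3
      omega
  have hpred : IsSkewTableau lam mu = AitkenAux.TabF (lam.sum - mu.sum) L M := by
    funext T
    unfold IsSkewTableau AitkenAux.TabF
    rw [hcells]
  rw [hpred,
    AitkenAux.count (lam.sum - mu.sum) lam.length L M hL hM hML hsupp hsum]
  congr 1
end

section
/- For every d ≥ 2, the number of minimal permutations with d descents of length d+2 satisfies p_{d+2,d} = 2^{d+2} − (d+1)(d+2) − 2. -/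
/-- `l` is a minimal permutation (word) with `d` descents: it has exactly `d`
descents and deleting any one entry yields a word with `d - 1` descents. -/
def IsMinimal (d : ℕ) (l : List ℕ) : Prop :=
  descents l = d ∧ ∀ i < l.length, descents (l.eraseIdx i) = d - 1

namespace MinPerm

def gtr (a b : ℕ) : Prop := b < a

@[simp] lemma gtr_def (a b : ℕ) : gtr a b ↔ b < a := Iff.rfl

def dcount : List ℕ → ℕ
  | a :: b :: t => (if b < a then 1 else 0) + dcount (b :: t)
  | _ => 0

lemma dcount_cons_cons (a b : ℕ) (t : List ℕ) :
    dcount (a :: b :: t) = (if b < a then 1 else 0) + dcount (b :: t) := rfl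

lemma descents_cons_cons (a b : ℕ) (t : List ℕ) :
    descents (a :: b :: t) = (if b < a then 1 else 0) + descents (b :: t) := by
  unfold descents
  have h1 : (a :: b :: t).length - 1 = ((b :: t).length - 1) + 1 := by simp
  rw [h1, List.range_succ_eq_map, List.filter_cons]
  have h2 : (fun i => decide ((a :: b :: t).getD (i + 1) 0 < (a :: b :: t).getD i 0)) ∘ Nat.succ
      = fun i => decide ((b :: t).getD (i + 1) 0 < (b :: t).getD i 0) := by
    funext i; simp [List.getD_cons_succ]
  rw [List.filter_map, h2]
  by_cases hba : b < a <;> simp [hba, Nat.add_comm]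

lemma descents_eq_dcount (l : List ℕ) : descents l = dcount l := by
  induction l with
  | nil => rfl
  | cons a t ih =>
    cases t with
    | nil => rfl
    | cons b t' =>
      rw [descents_cons_cons, ih]
      rfl

lemma dcount_append (w : List ℕ) (x y : ℕ) (t : List ℕ) :
    dcount ((w ++ [x]) ++ y :: t) = dcount (w ++ [x]) + ((if y < x then 1 else 0) + dcount (y :: t)) := by
  induction w with
  | nil => simp [dcount_cons_cons, dcount]
  | cons a w' ih =>
    cases w' with
    | nil => simp [dcount_cons_cons, dcount]
    | cons c w'' =>
      have e1 : ((a :: c :: w'' ++ [x]) ++ y :: t) = a :: ((c :: w'' ++ [x]) ++ y :: t) := by simp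
      have e2 : (c :: w'' ++ [x]) ++ y :: t = c :: ((w'' ++ [x]) ++ y :: t) := by simp
      rw [e1, e2]
      rw [show a :: c :: (w'' ++ [x] ++ y :: t) = a :: c :: (w'' ++ [x] ++ y :: t) from rfl]
      rw [dcount_cons_cons a c]
      rw [← e2, ih]
      simp [dcount_cons_cons]
      omega

lemma dcount_bound (l : List ℕ) : dcount l + 1 ≤ l.length ∨ l = [] := by
  induction l with
  | nil => right; rfl
  | cons a t ih =>
    left
    cases t with
    | nil => simp [dcount]
    | cons b t' =>
      rcases ih with h | h
      · rw [dcount_cons_cons]; simp only [List.length_cons] at *; split_ifs <;> omega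
      · simp at h

lemma pairwise_le_head (c : ℕ) (r : List ℕ) (h : (c :: r).Pairwise gtr) :
    ∀ e ∈ c :: r, e ≤ c := by
  intro e he
  rcases List.mem_cons.1 he with rfl | he'
  · exact le_refl e
  · have := (List.pairwise_cons.1 h).1 e he'
    simp only [gtr_def] at this
    omega

lemma pairwise_iff_dcount (l : List ℕ) (h : l ≠ []) :
    l.Pairwise gtr ↔ dcount l + 1 = l.length := by
  induction l with
  | nil => exact absurd rfl h
  | cons a t ih =>
    cases t with
    | nil => simp [dcount, gtr]
    | cons b t' =>
      rw [dcount_cons_cons]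
      constructor
      · intro hp
        have h1 := (List.pairwise_cons.1 hp).1 b (by simp)
        simp only [gtr_def] at h1
        have h2 := (List.pairwise_cons.1 hp).2
        rw [if_pos h1]
        have := (ih (by simp)).1 h2
        simp only [List.length_cons] at this ⊢
        omega
      · intro he
        have hb := dcount_bound (b :: t')
        simp only [List.length_cons] at hb he
        by_cases hba : b < a
        · rw [if_pos hba] at he
          have hp2 : (b :: t').Pairwise gtr := by
            apply (ih (by simp)).2
            simp only [List.length_cons]
            rcases hb with hb | hb
            · omega
            · simp at hb
          refine List.pairwise_cons.2 ⟨?_, hp2⟩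
          intro c hc
          have := pairwise_le_head b t' hp2 c hc
          simp only [gtr_def]
          omega
        · rw [if_neg hba] at he
          rcases hb with hb | hb
          · omega
          · simp at hb

lemma dcount_of_pairwise (l : List ℕ) (hp : l.Pairwise gtr) : dcount l + 1 = l.length ∨ l = [] := by
  cases l with
  | nil => right; rfl
  | cons a t => left; exact (pairwise_iff_dcount _ (by simp)).1 hp

lemma pairwise_lt_concat (w : List ℕ) (x : ℕ) (h : (w ++ [x]).Pairwise gtr) :
    ∀ e ∈ w, x < e := by
  intro e he
  have := List.pairwise_append.1 h
  have := this.2.2 e he x (by simp)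
  simpa using this

lemma decomp (l : List ℕ) (h : dcount l + 2 = l.length) :
    ∃ w x y t, l = (w ++ [x]) ++ y :: t ∧ (w ++ [x]).Pairwise gtr ∧ (y :: t).Pairwise gtr ∧
      x ≤ y := by
  induction l with
  | nil => simp [dcount] at h
  | cons a s ih =>
    cases s with
    | nil => simp [dcount] at h
    | cons b s' =>
      rw [dcount_cons_cons] at h
      simp only [List.length_cons] at h
      by_cases hba : b < a
      · rw [if_pos hba] at h
        obtain ⟨w, x, y, t, hl, hpu, hpv, hxy⟩ := ih (by simp only [List.length_cons]; omega)
        have hhead : ∀ e ∈ w ++ [x], e ≤ b := by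
          cases hw : w with
          | nil =>
            subst hw
            simp only [List.nil_append] at hl ⊢
            have : x = b := by
              have := congrArg List.head? hl
              exact (by simpa using this : _ = _).symm
            intro e he; simp at he; omega
          | cons c w' =>
            subst hw
            have hcb : c = b := by
              have := congrArg List.head? hl
              exact (by simpa using this : _ = _).symm
            subst hcb
            intro e he
            exact pairwise_le_head c (w' ++ [x]) (by simpa using hpu) e (by simpa using he)
        refine ⟨a :: w, x, y, t, ?_, ?_, hpv, hxy⟩
        · simp only [List.cons_append] at hl ⊢
          rw [← hl]
        · simp only [List.cons_append]
          refine List.pairwise_cons.2 ⟨?_, hpu⟩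
          intro e he
          have := hhead e he
          simp only [gtr_def]
          omega
      · rw [if_neg hba] at h
        refine ⟨[], a, b, s', by simp, by simp, ?_, by omega⟩
        apply (pairwise_iff_dcount _ (by simp)).2
        simp only [List.length_cons]
        omega

lemma dcount_pw (l : List ℕ) (hp : l.Pairwise gtr) (h : l ≠ []) : dcount l = l.length - 1 := by
  have := (pairwise_iff_dcount l h).1 hp
  omega

lemma era_main (w : List ℕ) (x2 x y y2 : ℕ) (t : List ℕ)
    (hu : ((w ++ [x2]) ++ [x]).Pairwise gtr) (hv : (y :: y2 :: t).Pairwise gtr)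
    (hxy : x < y) :
    dcount (((w ++ [x2]) ++ [x]) ++ y :: y2 :: t) = w.length + t.length + 2 := by
  rw [dcount_append]
  rw [dcount_pw _ hu (by simp), dcount_pw _ hv (by simp)]
  rw [if_neg (by omega)]
  simp
  omega

lemma era_i (w : List ℕ) (x2 x y y2 : ℕ) (t : List ℕ)
    (hu : ((w ++ [x2]) ++ [x]).Pairwise gtr) (hv : (y :: y2 :: t).Pairwise gtr)
    (hxy : x < y) (i : ℕ) (hi : i < w.length + t.length + 4) :
    dcount ((((w ++ [x2]) ++ [x]) ++ y :: y2 :: t).eraseIdx i) =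
      w.length + t.length + 1 +
        (if i = w.length + 1 then (if y < x2 then 1 else 0)
         else if i = w.length + 2 then (if y2 < x then 1 else 0) else 0) := by
  have hulen : ((w ++ [x2]) ++ [x]).length = w.length + 2 := by simp
  by_cases hA : i < ((w ++ [x2]) ++ [x]).length
  · rw [List.eraseIdx_append_of_lt_length hA]
    by_cases hA1 : i < w.length + 1
    · -- erase inside w ++ [x2]
      have h1 : i < (w ++ [x2]).length := by simp; omega
      rw [List.eraseIdx_append_of_lt_length h1]
      rw [dcount_append]
      have hsub : ((w ++ [x2]).eraseIdx i ++ [x]).Pairwise gtr := by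
        have he : (w ++ [x2]).eraseIdx i ++ [x] = ((w ++ [x2]) ++ [x]).eraseIdx i := by
          rw [List.eraseIdx_append_of_lt_length h1]
        rw [he]
        exact hu.eraseIdx i
      rw [dcount_pw _ hsub (by simp), dcount_pw _ hv (by simp)]
      have hc1 : ¬ (y < x) := by omega
      rw [if_neg hc1]
      have hlen : ((w ++ [x2]).eraseIdx i).length = w.length := by
        rw [List.length_eraseIdx_of_lt h1]; simp
      have hc2 : ¬ (i = w.length + 1) := by omega
      have hc3 : ¬ (i = w.length + 2) := by omega
      rw [if_neg hc2, if_neg hc3]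
      simp only [List.length_append, List.length_cons, hlen]
      simp; omega
    · -- i = w.length + 1 : erase x
      have hieq : i = w.length + 1 := by omega
      have h2 : (w ++ [x2]).length ≤ i := by simp; omega
      rw [List.eraseIdx_append_of_length_le h2]
      have he0 : [x].eraseIdx (i - (w ++ [x2]).length) = [] := by
        have : i - (w ++ [x2]).length = 0 := by simp; omega
        rw [this]; rfl
      rw [he0, List.append_nil, dcount_append]
      have hpw : (w ++ [x2]).Pairwise gtr := (List.pairwise_append.1 hu).1
      rw [dcount_pw _ hpw (by simp), dcount_pw _ hv (by simp)]
      rw [if_pos hieq]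
      simp only [List.length_append, List.length_cons]
      split_ifs <;> simp <;> omega
  · rw [List.eraseIdx_append_of_length_le (by omega)]
    by_cases hB1 : i = ((w ++ [x2]) ++ [x]).length
    · have he1 : i - ((w ++ [x2]) ++ [x]).length = 0 := by omega
      rw [he1]
      simp only [List.eraseIdx_cons_zero]
      rw [dcount_append]
      rw [dcount_pw _ hu (by simp), dcount_pw _ (List.pairwise_cons.1 hv).2 (by simp)]
      have hc2 : ¬ (i = w.length + 1) := by omega
      have hc3 : i = w.length + 2 := by omega
      rw [if_neg hc2, if_pos hc3]
      simp only [List.length_append, List.length_cons]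
      split_ifs <;> simp <;> omega
    · -- i > u.length
      obtain ⟨k, hk⟩ : ∃ k, i - ((w ++ [x2]) ++ [x]).length = k + 1 := ⟨i - ((w ++ [x2]) ++ [x]).length - 1, by omega⟩
      rw [hk, List.eraseIdx_cons_succ]
      rw [dcount_append]
      have hpsub : (y :: (y2 :: t).eraseIdx k).Pairwise gtr := by
        have he2 : y :: (y2 :: t).eraseIdx k = (y :: y2 :: t).eraseIdx (k + 1) := rfl
        rw [he2]
        exact hv.eraseIdx _
      rw [dcount_pw _ hu (by simp), dcount_pw _ hpsub (by simp)]
      have hc1 : ¬ (y < x) := by omega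
      rw [if_neg hc1]
      have hlt : k < (y2 :: t).length := by
        simp only [List.length_cons]
        have := hulen
        omega
      have hlen2 : ((y2 :: t).eraseIdx k).length = t.length := by
        rw [List.length_eraseIdx_of_lt hlt]; simp
      have hc2 : ¬ (i = w.length + 1) := by omega
      have hc3 : ¬ (i = w.length + 2) := by omega
      rw [if_neg hc2, if_neg hc3]
      simp only [List.length_append, List.length_cons, hlen2]
      simp; omega

def sortDesc (S : Finset ℕ) : List ℕ := S.sort (· ≥ ·)

lemma sortDesc_pairwise (S : Finset ℕ) : (sortDesc S).Pairwise gtr :=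
  (Finset.sortedGT_sort S).pairwise

@[simp] lemma mem_sortDesc {S : Finset ℕ} {a : ℕ} : a ∈ sortDesc S ↔ a ∈ S :=
  Finset.mem_sort _

@[simp] lemma length_sortDesc (S : Finset ℕ) : (sortDesc S).length = S.card :=
  Finset.length_sort _

lemma nodup_of_pairwise {l : List ℕ} (h : l.Pairwise gtr) : l.Nodup :=
  h.imp (fun {a b} hab => Nat.ne_of_gt hab)

lemma sortDesc_toFinset (S : Finset ℕ) : (sortDesc S).toFinset = S := by
  ext a; simp

lemma sortDesc_eq_of {l : List ℕ} {S : Finset ℕ} (hp : l.Pairwise gtr)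
    (h : l.toFinset = S) : sortDesc S = l := by
  refine (fun hp h1 h2 => List.Perm.eq_of_pairwise' (r := (· ≥ ·)) h1 h2 hp) ?_ ?_ ?_
  · apply List.perm_of_nodup_nodup_toFinset_eq (Finset.sort_nodup _ _) (nodup_of_pairwise hp)
    show (sortDesc S).toFinset = _
    rw [sortDesc_toFinset, h]
  · exact Finset.pairwise_sort _ _
  · exact hp.imp (fun {a b} hab => le_of_lt hab)

lemma shape_concat2 (l : List ℕ) (h : 2 ≤ l.length) :
    ∃ w x2 x, l = (w ++ [x2]) ++ [x] := by
  rcases hr : l.reverse with _ | ⟨x, r⟩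
  · have : l = [] := by simpa using congrArg List.reverse hr
    subst this; simp at h
  · rcases hr2 : r with _ | ⟨x2, r2⟩
    · subst hr2
      have : l = [x] := by simpa using congrArg List.reverse hr
      subst this; simp at h
    · refine ⟨r2.reverse, x2, x, ?_⟩
      have := congrArg List.reverse hr
      simp [hr2] at this
      simp [this]

lemma shape_cons2 (l : List ℕ) (h : 2 ≤ l.length) :
    ∃ y y2 t, l = y :: y2 :: t := by
  rcases l with _ | ⟨y, _ | ⟨y2, t⟩⟩
  · simp at h
  · simp at h
  · exact ⟨y, y2, t, rfl⟩

def Phi (n : ℕ) (S : Finset ℕ) : List ℕ := sortDesc S ++ sortDesc (Finset.range n \ S)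

def Good (n : ℕ) (S : Finset ℕ) : Prop :=
  2 ≤ S.card ∧ S.card + 2 ≤ n ∧
  (∃ x ∈ S, ∃ y ∈ Finset.range n \ S, ∃ s ∈ S, s < x ∧ x < y) ∧
  (∃ x ∈ Finset.range n \ S, ∃ y ∈ Finset.range n \ S, ∃ s ∈ S, s < x ∧ x < y)

lemma phi_spec (n : ℕ) (S : Finset ℕ) (hS : S ⊆ Finset.range n) (hg : Good n S) :
    ((Phi n S).Perm (List.range n) ∧ (Phi n S).length = n ∧ descents (Phi n S) = n - 2 ∧
      ∀ i < n, descents ((Phi n S).eraseIdx i) = n - 3) ∧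
      ∃ w x y t, sortDesc S = w ++ [x] ∧ sortDesc (Finset.range n \ S) = y :: t ∧ x < y := by
  obtain ⟨hk2, hkn, hC1, hC2⟩ := hg
  set C := Finset.range n \ S with hC_def
  have hSn : S.card ≤ n := by
    have := Finset.card_le_card hS
    simpa using this
  have hcardC : C.card = n - S.card := by
    rw [hC_def, Finset.card_sdiff_of_subset hS, Finset.card_range]
  obtain ⟨w, x2, x, hu_eq⟩ := shape_concat2 (sortDesc S) (by rw [length_sortDesc]; exact hk2)
  obtain ⟨y, y2, t, hv_eq⟩ := shape_cons2 (sortDesc C) (by rw [length_sortDesc]; omega)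
  have hu : ((w ++ [x2]) ++ [x]).Pairwise gtr := hu_eq ▸ sortDesc_pairwise S
  have hv : (y :: y2 :: t).Pairwise gtr := hv_eq ▸ sortDesc_pairwise C
  have hmemS : ∀ a, a ∈ (w ++ [x2]) ++ [x] ↔ a ∈ S := by
    intro a; rw [← hu_eq]; exact mem_sortDesc
  have hmemC : ∀ a, a ∈ y :: y2 :: t ↔ a ∈ C := by
    intro a; rw [← hv_eq]; exact mem_sortDesc
  have hxmin : ∀ a ∈ S, x ≤ a := by
    intro a ha
    rcases List.mem_append.1 ((hmemS a).2 ha) with h' | h'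
    · exact le_of_lt (pairwise_lt_concat _ _ hu a h')
    · simp at h'; omega
  have hymax : ∀ b ∈ C, b ≤ y := by
    intro b hb
    exact pairwise_le_head y (y2 :: t) hv b ((hmemC b).2 hb)
  have hx2min : ∀ a ∈ S, a ≠ x → x2 ≤ a := by
    intro a ha hax
    have h' := (hmemS a).2 ha
    rcases List.mem_append.1 h' with h'' | h''
    · rcases List.mem_append.1 h'' with h3 | h3
      · exact le_of_lt (pairwise_lt_concat w x2 (List.pairwise_append.1 hu).1 a h3)
      · simp at h3; omega
    · simp at h''; omega
  have hy2max : ∀ b ∈ C, b ≠ y → b ≤ y2 := by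
    intro b hb hby
    have h' := (hmemC b).2 hb
    rcases List.mem_cons.1 h' with h'' | h''
    · omega
    · exact pairwise_le_head y2 t (List.pairwise_cons.1 hv).2 b h''
  obtain ⟨x', hx'S, y', hy'C, s, hsS, hsx', hx'y'⟩ := hC1
  obtain ⟨x'', hx''C, y'', hy''C, s', hs'S, hs'x'', hx''y''⟩ := hC2
  have hxy : x < y := by
    have h1 := hxmin x' hx'S
    have h2 := hymax y' hy'C
    have h3 := hxmin s hsS
    omega
  have hx2y : x2 < y := by
    have h1 : x' ≠ x := by have := hxmin s hsS; omega
    have h2 := hx2min x' hx'S h1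
    have h3 := hymax y' hy'C
    omega
  have hxy2 : x < y2 := by
    have h1 : x'' ≠ y := by have := hymax y'' hy''C; omega
    have h2 := hy2max x'' hx''C h1
    have h3 := hxmin s' hs'S
    omega
  have hwl : w.length + 2 = S.card := by
    have := congrArg List.length hu_eq
    simp at this; omega
  have htl : t.length + 2 = C.card := by
    have := congrArg List.length hv_eq
    simp at this; omega
  have hphi : Phi n S = ((w ++ [x2]) ++ [x]) ++ y :: y2 :: t := by
    rw [Phi, hu_eq, ← hC_def, hv_eq]
  have hlen : (Phi n S).length = n := by
    rw [hphi]; simp; omega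
  have hnd : (Phi n S).Nodup := by
    rw [Phi]
    apply List.Nodup.append
    · exact nodup_of_pairwise (sortDesc_pairwise S)
    · exact nodup_of_pairwise (sortDesc_pairwise C)
    · intro a haS haC
      rw [mem_sortDesc] at haS haC
      rw [← hC_def] at haC
      exact (Finset.mem_sdiff.1 haC).2 haS
  have hperm : (Phi n S).Perm (List.range n) := by
    apply List.perm_of_nodup_nodup_toFinset_eq hnd List.nodup_range
    have hrt : (List.range n).toFinset = Finset.range n := by
      ext a; simp
    rw [hrt, Phi, List.toFinset_append, sortDesc_toFinset, sortDesc_toFinset, ← hC_def]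
    exact Finset.union_sdiff_of_subset hS
  refine ⟨⟨hperm, hlen, ?_, ?_⟩, w ++ [x2], x, y, y2 :: t, by simpa using hu_eq, by exact hv_eq, hxy⟩
  · rw [descents_eq_dcount, hphi, era_main w x2 x y y2 t hu hv hxy]
    omega
  · intro i hi
    rw [descents_eq_dcount, hphi, era_i w x2 x y y2 t hu hv hxy i (by omega)]
    rw [if_neg (by omega : ¬ (y < x2)), if_neg (by omega : ¬ (y2 < x))]
    have : (if i = w.length + 1 then 0 else if i = w.length + 2 then 0 else 0) = 0 := by
      split_ifs <;> rfl
    rw [this]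
    omega

lemma exists_good (n : ℕ) (hn : 4 ≤ n) (l : List ℕ) (hperm : l.Perm (List.range n))
    (h1 : descents l = n - 2) (h2 : ∀ i < l.length, descents (l.eraseIdx i) = n - 3) :
    ∃ S, S ⊆ Finset.range n ∧ Good n S ∧ Phi n S = l := by
  have hlen : l.length = n := by rw [hperm.length_eq, List.length_range]
  have hnd : l.Nodup := hperm.nodup_iff.2 List.nodup_range
  have hd : dcount l = n - 2 := by rw [← descents_eq_dcount]; exact h1
  obtain ⟨w0, x, y, t0, hl, hpu, hpv, hxley⟩ := decomp l (by omega)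
  have hmem : ∀ a, a ∈ l ↔ a < n := by
    intro a; rw [hperm.mem_iff, List.mem_range]
  have hndsplit := List.nodup_append.1 (by rw [← hl]; exact hnd)
  have hdisj : ∀ a, a ∈ w0 ++ [x] → a ∈ y :: t0 → False := by
    intro a h1' h2'
    exact hndsplit.2.2 a h1' a h2' rfl
  have hxy : x < y := by
    rcases Nat.lt_or_ge x y with h | h
    · exact h
    · have : x = y := by omega
      subst this
      exact absurd (hdisj x (by simp) (by simp)) (by simp)
  -- w0 ≠ []
  have hw0 : w0 ≠ [] := by
    intro hw0
    subst hw0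
    have he : l.eraseIdx 0 = y :: t0 := by rw [hl]; rfl
    have := h2 0 (by omega)
    rw [he, descents_eq_dcount] at this
    rw [dcount_pw _ hpv (by simp)] at this
    have hll := congrArg List.length hl
    simp [hlen] at hll
    simp at this
    omega
  obtain ⟨w, x2, hw⟩ : ∃ w x2, w0 = w ++ [x2] := by
    rcases List.eq_nil_or_concat w0 with h | ⟨w, x2, h⟩
    · exact absurd h hw0
    · exact ⟨w, x2, by simpa using h⟩
  subst hw
  -- t0 ≠ []
  have ht0 : t0 ≠ [] := by
    intro ht0
    subst ht0
    have hi : ((w ++ [x2]) ++ [x]).length < l.length := by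
      rw [hl]; simp
    have he : l.eraseIdx (((w ++ [x2]) ++ [x]).length) = (w ++ [x2]) ++ [x] := by
      rw [hl, List.eraseIdx_append_of_length_le (le_refl _)]
      simp
    have := h2 _ hi
    rw [he, descents_eq_dcount, dcount_pw _ hpu (by simp)] at this
    have hll := congrArg List.length hl
    simp [hlen] at hll
    simp at this
    omega
  obtain ⟨y2, t, ht⟩ : ∃ y2 t, t0 = y2 :: t := by
    rcases t0 with _ | ⟨y2, t⟩
    · exact absurd rfl ht0
    · exact ⟨y2, t, rfl⟩
  subst ht
  have hll : n = w.length + t.length + 4 := by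
    have := congrArg List.length hl
    simp [hlen] at this
    omega
  -- key comparisons from minimality
  have hkey1 : ¬ (y < x2) := by
    intro hyx2
    have := h2 (w.length + 1) (by omega)
    rw [hl, descents_eq_dcount, era_i w x2 x y y2 t hpu hpv hxy _ (by omega)] at this
    rw [if_pos rfl, if_pos hyx2] at this
    omega
  have hkey2 : ¬ (y2 < x) := by
    intro hy2x
    have := h2 (w.length + 2) (by omega)
    rw [hl, descents_eq_dcount, era_i w x2 x y y2 t hpu hpv hxy _ (by omega)] at this
    rw [if_neg (by omega), if_pos rfl, if_pos hy2x] at this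
    omega
  have hx2y : x2 < y := by
    have : x2 ≠ y := by
      intro h; exact hdisj x2 (by simp) (by rw [h]; simp)
    omega
  have hxy2 : x < y2 := by
    have : x ≠ y2 := by
      intro h; exact hdisj x (by simp) (by rw [h]; simp)
    omega
  set S : Finset ℕ := ((w ++ [x2]) ++ [x]).toFinset with hS_def
  have hSu : sortDesc S = (w ++ [x2]) ++ [x] := sortDesc_eq_of hpu rfl
  have hcardS : S.card = w.length + 2 := by
    rw [hS_def, List.toFinset_card_of_nodup (nodup_of_pairwise hpu)]
    simp
  have hmemS : ∀ a, a ∈ S ↔ a ∈ (w ++ [x2]) ++ [x] := by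
    intro a; rw [hS_def]; simp; tauto
  have hSsub : S ⊆ Finset.range n := by
    intro a ha
    rw [Finset.mem_range, ← hmem a, hl]
    rw [hmemS] at ha
    exact List.mem_append.2 (Or.inl ha)
  have hCv : sortDesc (Finset.range n \ S) = y :: y2 :: t := by
    apply sortDesc_eq_of hpv
    ext a
    simp only [List.mem_toFinset, Finset.mem_sdiff, Finset.mem_range]
    constructor
    · intro ha
      refine ⟨by rw [← hmem a, hl]; exact List.mem_append.2 (Or.inr ha), ?_⟩
      intro haS
      exact hdisj a ((hmemS a).1 haS) ha
    · rintro ⟨han, haS⟩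
      have : a ∈ l := (hmem a).2 han
      rw [hl] at this
      rcases List.mem_append.1 this with h' | h'
      · exact absurd ((hmemS a).2 h') haS
      · exact h'
  refine ⟨S, hSsub, ⟨by omega, by omega, ?_, ?_⟩, ?_⟩
  · -- C1
    refine ⟨x2, (hmemS x2).2 (by simp), y, ?_, x, (hmemS x).2 (by simp), ?_, hx2y⟩
    · have : y ∈ (sortDesc (Finset.range n \ S)) := by rw [hCv]; simp
      rwa [mem_sortDesc] at this
    · have := pairwise_lt_concat (w ++ [x2]) x hpu x2 (by simp)
      omega
  · -- C2
    have hy2C : y2 ∈ Finset.range n \ S := by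
      have : y2 ∈ (sortDesc (Finset.range n \ S)) := by rw [hCv]; simp
      rwa [mem_sortDesc] at this
    have hyC : y ∈ Finset.range n \ S := by
      have : y ∈ (sortDesc (Finset.range n \ S)) := by rw [hCv]; simp
      rwa [mem_sortDesc] at this
    have hy2y : y2 < y := by
      have := pairwise_le_head y (y2 :: t) hpv y2 (by simp)
      have : y2 ≠ y := by
        intro h
        have := List.pairwise_cons.1 hpv
        have := this.1 y2 (by simp)
        simp at this
        omega
      have := pairwise_le_head y (y2 :: t) hpv y2 (by simp)
      omega
    exact ⟨y2, hy2C, y, hyC, x, (hmemS x).2 (by simp), hxy2, hy2y⟩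
  · rw [Phi, hSu, hCv, hl]

lemma inj_helper {u v u' v' : List ℕ} (h : u ++ v = u' ++ v')
    (hlt : u.length < u'.length) (hpu' : u'.Pairwise gtr)
    {w : List ℕ} {x y : ℕ} {t : List ℕ} (hu : u = w ++ [x]) (hv : v = y :: t)
    (hxy : x < y) : False := by
  rcases List.append_eq_append_iff.1 h with ⟨m, hm1, hm2⟩ | ⟨m, hm1, hm2⟩
  · -- u' = u ++ m, v = m ++ v'
    have hmne : m ≠ [] := by
      intro hm
      subst hm
      simp at hm1
      subst hm1
      omega
    rcases m with _ | ⟨z, m'⟩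
    · exact absurd rfl hmne
    · have hz : z = y := by
        rw [hv] at hm2
        have := congrArg List.head? hm2
        simpa using this.symm
      subst hz
      rw [hu] at hm1
      rw [hm1] at hpu'
      have := List.pairwise_append.1 (by simpa using hpu' : ((w ++ [x]) ++ z :: m').Pairwise gtr)
      have := this.2.2 x (by simp) z (by simp)
      simp at this
      omega
  · -- u = u' ++ m
    have := congrArg List.length hm1
    simp at this
    omega

lemma phi_inj (n : ℕ) {S S' : Finset ℕ} (hS : S ⊆ Finset.range n) (hS' : S' ⊆ Finset.range n)
    (hg : Good n S) (hg' : Good n S') (h : Phi n S = Phi n S') : S = S' := by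
  obtain ⟨-, w, x, y, t, hu_eq, hv_eq, hxy⟩ := phi_spec n S hS hg
  obtain ⟨-, w', x', y', t', hu_eq', hv_eq', hxy'⟩ := phi_spec n S' hS' hg'
  have happ : sortDesc S ++ sortDesc (Finset.range n \ S)
      = sortDesc S' ++ sortDesc (Finset.range n \ S') := h
  have hlen : (sortDesc S).length = (sortDesc S').length := by
    rcases Nat.lt_trichotomy (sortDesc S).length (sortDesc S').length with h' | h' | h'
    · exact absurd (inj_helper happ h' (sortDesc_pairwise S') hu_eq hv_eq hxy) (fun f => f)
    · exact h'
    · exact absurd (inj_helper happ.symm h' (sortDesc_pairwise S) hu_eq' hv_eq' hxy') (fun f => f)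
  have := List.append_inj_left happ hlen
  have h2 := congrArg List.toFinset this
  rwa [sortDesc_toFinset, sortDesc_toFinset] at h2

def phiB (n : ℕ) (p : ℕ × ℕ) : Finset ℕ :=
  if p.2 + p.1 ≤ n then insert p.2 (Finset.Ico (n - p.1 + 1) n)
  else (Finset.Ico (n - p.1 - 1) n).erase p.2

lemma phiB_card (n : ℕ) (k j : ℕ) (hk2 : 2 ≤ k) (hkn : k + 2 ≤ n) (hj : j < n) :
    (phiB n (k, j)).card = k := by
  unfold phiB
  split_ifs with hbr
  · simp only at hbr ⊢
    rw [Finset.card_insert_of_notMem (by simp [Finset.mem_Ico]; omega)]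
    rw [Nat.card_Ico]
    omega
  · simp only at hbr ⊢
    rw [Finset.card_erase_of_mem (by simp [Finset.mem_Ico]; omega)]
    rw [Nat.card_Ico]
    omega

lemma phiB_subset (n : ℕ) (k j : ℕ) (hj : j < n) : phiB n (k, j) ⊆ Finset.range n := by
  unfold phiB
  split_ifs with hbr <;> intro a ha
  · simp only [Finset.mem_insert, Finset.mem_Ico] at ha
    rcases ha with rfl | ha <;> simp [Finset.mem_range] <;> omega
  · simp only [Finset.mem_erase, Finset.mem_Ico] at ha
    simp [Finset.mem_range]; omega

lemma phiB_not_good (n : ℕ) (k j : ℕ) (hk2 : 2 ≤ k) (hkn : k + 2 ≤ n) (hj : j < n) :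
    ¬ ((∃ x ∈ phiB n (k, j), ∃ y ∈ Finset.range n \ phiB n (k, j), ∃ s ∈ phiB n (k, j), s < x ∧ x < y) ∧
       (∃ x ∈ Finset.range n \ phiB n (k, j), ∃ y ∈ Finset.range n \ phiB n (k, j),
          ∃ s ∈ phiB n (k, j), s < x ∧ x < y)) := by
  unfold phiB
  split_ifs with hbr
  · -- branch 1 : ¬C1
    simp only at hbr
    rintro ⟨⟨x, hx, y, hy, s, hs, hsx, hxy⟩, -⟩
    simp only [Finset.mem_insert, Finset.mem_Ico, Finset.mem_sdiff, Finset.mem_range] at hx hy hs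
    rcases hx with rfl | hx
    · rcases hs with rfl | hs <;> omega
    · -- x ≥ n-k+1, y ∈ comp : y < n-k+1
      have : ¬ (n - k + 1 ≤ y ∧ y < n) := fun h => hy.2 (Or.inr h)
      omega
  · -- branch 2 : ¬C2
    simp only at hbr
    rintro ⟨-, ⟨x, hx, y, hy, s, hs, hsx, hxy⟩⟩
    simp only [Finset.mem_erase, Finset.mem_Ico, Finset.mem_sdiff, Finset.mem_range] at hx hy hs
    -- comp = range (n-k-1) ∪ {j}
    have hx' : x = j ∨ x < n - k - 1 := by
      by_contra hcon
      push_neg at hcon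
      exact hx.2 ⟨hcon.1, by omega, hx.1⟩
    have hy' : y = j ∨ y < n - k - 1 := by
      by_contra hcon
      push_neg at hcon
      exact hy.2 ⟨hcon.1, by omega, hy.1⟩
    rcases hx' with rfl | hx'
    · rcases hy' with rfl | hy' <;> omega
    · omega

lemma not_good_structure (n : ℕ) (hn : 4 ≤ n) (S : Finset ℕ) (hsub : S ⊆ Finset.range n)
    (hk2 : 2 ≤ S.card) (hkn : S.card + 2 ≤ n)
    (hbad : ¬ ((∃ x ∈ S, ∃ y ∈ Finset.range n \ S, ∃ s ∈ S, s < x ∧ x < y) ∧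
       (∃ x ∈ Finset.range n \ S, ∃ y ∈ Finset.range n \ S, ∃ s ∈ S, s < x ∧ x < y))) :
    ∃ k j, (2 ≤ k ∧ k + 1 ≤ n - 1 ∧ j < n) ∧ phiB n (k, j) = S := by
  set k := S.card with hk_def
  have hSne : S.Nonempty := Finset.card_pos.1 (by omega)
  have hcompcard : (Finset.range n \ S).card = n - k := by
    rw [Finset.card_sdiff_of_subset hsub, Finset.card_range]
  have hcompne : (Finset.range n \ S).Nonempty := Finset.card_pos.1 (by omega)
  have hmemn : ∀ a ∈ S, a < n := fun a ha => Finset.mem_range.1 (hsub ha)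
  rcases not_and_or.1 hbad with hnc1 | hnc2
  · -- ¬C1 case
    push_neg at hnc1
    set m := S.min' hSne with hm_def
    have hmS : m ∈ S := S.min'_mem hSne
    have hup : ∀ e ∈ S, e ≠ m → n - k + 1 ≤ e := by
      intro e he hem
      have hme : m < e := lt_of_le_of_ne (S.min'_le e he) (Ne.symm hem)
      have hylt : ∀ y ∈ Finset.range n \ S, y < e := by
        intro y hy
        have := hnc1 e he y hy m hmS hme
        have hyne : y ≠ e := by
          intro h; subst h; exact (Finset.mem_sdiff.1 hy).2 he
        omega
      have hins : insert m (Finset.range n \ S) ⊆ Finset.range e := by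
        intro b hb
        rcases Finset.mem_insert.1 hb with rfl | hb'
        · exact Finset.mem_range.2 hme
        · exact Finset.mem_range.2 (hylt b hb')
      have hcard := Finset.card_le_card hins
      rw [Finset.card_insert_of_notMem (by simp [Finset.mem_sdiff]; intro; exact hmS),
        hcompcard, Finset.card_range] at hcard
      omega
    have hsub2 : S.erase m ⊆ Finset.Ico (n - k + 1) n := by
      intro e he
      rw [Finset.mem_erase] at he
      rw [Finset.mem_Ico]
      exact ⟨hup e he.2 he.1, hmemn e he.2⟩
    have hcards : (Finset.Ico (n - k + 1) n).card ≤ (S.erase m).card := by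
      rw [Nat.card_Ico, Finset.card_erase_of_mem hmS]
      omega
    have heq : S.erase m = Finset.Ico (n - k + 1) n :=
      Finset.eq_of_subset_of_card_le hsub2 hcards
    have hmn : m + k ≤ n := by
      have he0 : n - k + 1 ∈ S.erase m := by
        rw [heq, Finset.mem_Ico]; omega
      have := S.min'_le (n - k + 1) (Finset.mem_of_mem_erase he0)
      have : m ≠ n - k + 1 := fun h => by rw [← h] at he0; simp at he0
      omega
    refine ⟨k, m, ⟨by omega, by omega, hmemn m hmS⟩, ?_⟩
    unfold phiB
    rw [if_pos (by simp; omega)]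
    simp only
    rw [← heq, Finset.insert_erase hmS]
  · -- ¬C2 case
    push_neg at hnc2
    set M := (Finset.range n \ S).max' hcompne with hM_def
    have hMC : M ∈ Finset.range n \ S := Finset.max'_mem _ _
    have hMn : M < n := Finset.mem_range.1 (Finset.mem_sdiff.1 hMC).1
    have hdown : ∀ e ∈ Finset.range n \ S, e ≠ M → e < n - k - 1 := by
      intro e he heM
      have heM' : e < M := lt_of_le_of_ne (Finset.le_max' _ e he) heM
      have hslt : ∀ s ∈ S, e < s := by
        intro s hs
        have himp := hnc2 e he M hMC s hs
        have hse : s ≠ e := by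
          intro h; subst h; exact (Finset.mem_sdiff.1 he).2 hs
        rcases Nat.lt_or_ge s e with h | h
        · have := himp h; omega
        · omega
      have hins : insert M S ⊆ Finset.Ico (e + 1) n := by
        intro b hb
        rcases Finset.mem_insert.1 hb with rfl | hb'
        · rw [Finset.mem_Ico]; omega
        · rw [Finset.mem_Ico]; exact ⟨hslt b hb', hmemn b hb'⟩
      have hcard := Finset.card_le_card hins
      rw [Finset.card_insert_of_notMem (fun h => (Finset.mem_sdiff.1 hMC).2 h),
        Nat.card_Ico] at hcard
      omega
    have hsub2 : (Finset.range n \ S).erase M ⊆ Finset.range (n - k - 1) := by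
      intro e he
      rw [Finset.mem_erase] at he
      exact Finset.mem_range.2 (hdown e he.2 he.1)
    have hcards : (Finset.range (n - k - 1)).card ≤ ((Finset.range n \ S).erase M).card := by
      rw [Finset.card_range, Finset.card_erase_of_mem hMC, hcompcard]
    have heq : (Finset.range n \ S).erase M = Finset.range (n - k - 1) :=
      Finset.eq_of_subset_of_card_le hsub2 hcards
    have hMge : n - k - 1 ≤ M := by
      by_contra hcon
      push_neg at hcon
      have : Finset.range n \ S ⊆ Finset.range (n - k - 1) := by
        intro e he
        rcases eq_or_ne e M with rfl | hne
        · exact Finset.mem_range.2 hcon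
        · rw [← heq]; exact Finset.mem_erase.2 ⟨hne, he⟩
      have := Finset.card_le_card this
      rw [hcompcard, Finset.card_range] at this
      omega
    have hSeq : S = (Finset.Ico (n - k - 1) n).erase M := by
      ext a
      simp only [Finset.mem_erase, Finset.mem_Ico]
      constructor
      · intro ha
        refine ⟨?_, ?_, hmemn a ha⟩
        · intro h; subst h; exact (Finset.mem_sdiff.1 hMC).2 ha
        · by_contra hcon
          push_neg at hcon
          have : a ∈ (Finset.range n \ S).erase M := by
            rw [heq]; exact Finset.mem_range.2 (by omega)
          exact (Finset.mem_sdiff.1 (Finset.mem_of_mem_erase this)).2 ha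
      · rintro ⟨haM, hge, hlt⟩
        by_contra hcon
        have : a ∈ (Finset.range n \ S).erase M :=
          Finset.mem_erase.2 ⟨haM, Finset.mem_sdiff.2 ⟨Finset.mem_range.2 hlt, hcon⟩⟩
        rw [heq, Finset.mem_range] at this
        omega
    -- three subcases for M
    rcases Nat.lt_trichotomy M (n - k) with hM1 | hM2 | hM3
    · -- M = n - k - 1
      have hMeq : M = n - k - 1 := by omega
      refine ⟨k, n - k, ⟨by omega, by omega, by omega⟩, ?_⟩
      unfold phiB
      rw [if_pos (by simp; omega)]
      simp only
      rw [hSeq, hMeq]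
      ext a
      simp only [Finset.mem_insert, Finset.mem_Ico, Finset.mem_erase]
      omega
    · -- M = n - k
      refine ⟨k, n - k - 1, ⟨by omega, by omega, by omega⟩, ?_⟩
      unfold phiB
      rw [if_pos (by simp; omega)]
      simp only
      rw [hSeq, ← hM2]
      ext a
      simp only [Finset.mem_insert, Finset.mem_Ico, Finset.mem_erase]
      omega
    · -- M ≥ n - k + 1
      refine ⟨k, M, ⟨by omega, by omega, hMn⟩, ?_⟩
      unfold phiB
      rw [if_neg (by simp; omega)]
      simp only
      exact hSeq.symm

lemma phiB_injOn (n : ℕ) (hn : 4 ≤ n) :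
    Set.InjOn (phiB n) ↑((Finset.Ico 2 (n - 1)) ×ˢ (Finset.range n)) := by
  rintro ⟨k, j⟩ hkj ⟨k', j'⟩ hkj' heq
  simp only [Finset.coe_product, Set.mem_prod, Finset.mem_coe, Finset.mem_Ico,
    Finset.mem_range] at hkj hkj'
  obtain ⟨⟨hk2, hk1⟩, hj⟩ := hkj
  obtain ⟨⟨hk2', hk1'⟩, hj'⟩ := hkj'
  have hkk : k = k' := by
    have h1 := phiB_card n k j hk2 (by omega) hj
    have h2 := phiB_card n k' j' hk2' (by omega) hj'
    rw [heq] at h1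
    omega
  subst hkk
  suffices hjj : j = j' by rw [hjj]
  unfold phiB at heq
  simp only at heq
  by_cases hb1 : j + k ≤ n <;> by_cases hb2 : j' + k ≤ n
  · rw [if_pos hb1, if_pos hb2] at heq
    have : j ∈ insert j' (Finset.Ico (n - k + 1) n) := by
      rw [← heq]; exact Finset.mem_insert_self _ _
    rcases Finset.mem_insert.1 this with h | h
    · exact h
    · rw [Finset.mem_Ico] at h; omega
  · rw [if_pos hb1, if_neg hb2] at heq
    exfalso
    have h1 : (n - k - 1) ∈ (Finset.Ico (n - k - 1) n).erase j' := by
      rw [Finset.mem_erase, Finset.mem_Ico]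
      refine ⟨by omega, by omega, by omega⟩
    rw [← heq] at h1
    have h2 : (n - k) ∈ (Finset.Ico (n - k - 1) n).erase j' := by
      rw [Finset.mem_erase, Finset.mem_Ico]
      refine ⟨by omega, by omega, by omega⟩
    rw [← heq] at h2
    rcases Finset.mem_insert.1 h1 with h | h
    · -- j = n - k - 1
      rcases Finset.mem_insert.1 h2 with h' | h'
      · omega
      · rw [Finset.mem_Ico] at h'; omega
    · rw [Finset.mem_Ico] at h; omega
  · rw [if_neg hb1, if_pos hb2] at heq
    exfalso
    have h1 : (n - k - 1) ∈ (Finset.Ico (n - k - 1) n).erase j := by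
      rw [Finset.mem_erase, Finset.mem_Ico]
      refine ⟨by omega, by omega, by omega⟩
    rw [heq] at h1
    have h2 : (n - k) ∈ (Finset.Ico (n - k - 1) n).erase j := by
      rw [Finset.mem_erase, Finset.mem_Ico]
      refine ⟨by omega, by omega, by omega⟩
    rw [heq] at h2
    rcases Finset.mem_insert.1 h1 with h | h
    · rcases Finset.mem_insert.1 h2 with h' | h'
      · omega
      · rw [Finset.mem_Ico] at h'; omega
    · rw [Finset.mem_Ico] at h; omega
  · rw [if_neg hb1, if_neg hb2] at heq
    by_contra hne
    have hj_mem : j ∈ (Finset.Ico (n - k - 1) n).erase j' := by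
      rw [Finset.mem_erase, Finset.mem_Ico]
      refine ⟨hne, by omega, hj⟩
    rw [← heq, Finset.mem_erase] at hj_mem
    exact hj_mem.1 rfl

lemma count_good (n : ℕ) (hn : 4 ≤ n) [inst : DecidablePred (Good n)] :
    (((Finset.range n).powerset).filter (Good n)).card + (n * n + 2) = 2 ^ n + n := by
  classical
  have hsplit : (((Finset.range n).powerset).filter (Good n)).card
      + (((Finset.range n).powerset).filter (fun S => ¬ Good n S)).card
      = ((Finset.range n).powerset).card := by
    rw [Finset.card_filter_add_card_filter_not]
  rw [Finset.card_powerset, Finset.card_range] at hsplit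
  -- decompose the bad part
  have hbad_eq : ((Finset.range n).powerset).filter (fun S => ¬ Good n S)
      = (((Finset.range n).powerset).filter (fun S => S.card < 2 ∨ n < S.card + 2))
        ∪ (((Finset.range n).powerset).filter (fun S => (2 ≤ S.card ∧ S.card + 2 ≤ n) ∧
            ¬ ((∃ x ∈ S, ∃ y ∈ Finset.range n \ S, ∃ s ∈ S, s < x ∧ x < y) ∧
               (∃ x ∈ Finset.range n \ S, ∃ y ∈ Finset.range n \ S, ∃ s ∈ S, s < x ∧ x < y)))) := by
    rw [← Finset.filter_or]
    apply Finset.filter_congr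
    intro S hS
    unfold Good
    constructor
    · intro h
      by_cases hs : 2 ≤ S.card ∧ S.card + 2 ≤ n
      · right
        refine ⟨hs, ?_⟩
        intro hc
        exact h ⟨hs.1, hs.2, hc.1, hc.2⟩
      · left; omega
    · rintro (h | ⟨hs, hc⟩) <;> rintro ⟨h1, h2, h3, h4⟩
      · omega
      · exact hc ⟨h3, h4⟩
  have hdisj : Disjoint (((Finset.range n).powerset).filter (fun S => S.card < 2 ∨ n < S.card + 2))
      (((Finset.range n).powerset).filter (fun S => (2 ≤ S.card ∧ S.card + 2 ≤ n) ∧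
        ¬ ((∃ x ∈ S, ∃ y ∈ Finset.range n \ S, ∃ s ∈ S, s < x ∧ x < y) ∧
           (∃ x ∈ Finset.range n \ S, ∃ y ∈ Finset.range n \ S, ∃ s ∈ S, s < x ∧ x < y)))) := by
    rw [Finset.disjoint_left]
    intro S h1 h2
    rw [Finset.mem_filter] at h1 h2
    omega
  -- size-bad count
  have hsize : (((Finset.range n).powerset).filter (fun S => S.card < 2 ∨ n < S.card + 2)).card
      = 2 * n + 2 := by
    have he : ((Finset.range n).powerset).filter (fun S => S.card < 2 ∨ n < S.card + 2)
        = (((Finset.range n).powersetCard 0) ∪ ((Finset.range n).powersetCard 1))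
          ∪ (((Finset.range n).powersetCard (n - 1)) ∪ ((Finset.range n).powersetCard n)) := by
      ext S
      simp only [Finset.mem_filter, Finset.mem_powerset, Finset.mem_union,
        Finset.mem_powersetCard]
      constructor
      · rintro ⟨hsub, hc⟩
        have hle : S.card ≤ n := by
          have := Finset.card_le_card hsub
          rwa [Finset.card_range] at this
        have : S.card = 0 ∨ S.card = 1 ∨ S.card = n - 1 ∨ S.card = n := by omega
        rcases this with h | h | h | h
        · exact Or.inl (Or.inl ⟨hsub, h⟩)
        · exact Or.inl (Or.inr ⟨hsub, h⟩)
        · exact Or.inr (Or.inl ⟨hsub, h⟩)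
        · exact Or.inr (Or.inr ⟨hsub, h⟩)
      · rintro ((⟨h, hc⟩ | ⟨h, hc⟩) | (⟨h, hc⟩ | ⟨h, hc⟩)) <;> exact ⟨h, by omega⟩
    rw [he]
    have d1 : Disjoint ((Finset.range n).powersetCard 0) ((Finset.range n).powersetCard 1) := by
      rw [Finset.disjoint_left]
      intro S h1 h2
      rw [Finset.mem_powersetCard] at h1 h2
      omega
    have d2 : Disjoint ((Finset.range n).powersetCard (n - 1)) ((Finset.range n).powersetCard n) := by
      rw [Finset.disjoint_left]
      intro S h1 h2
      rw [Finset.mem_powersetCard] at h1 h2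
      omega
    have d3 : Disjoint (((Finset.range n).powersetCard 0) ∪ ((Finset.range n).powersetCard 1))
        (((Finset.range n).powersetCard (n - 1)) ∪ ((Finset.range n).powersetCard n)) := by
      rw [Finset.disjoint_left]
      intro S h1 h2
      rw [Finset.mem_union, Finset.mem_powersetCard, Finset.mem_powersetCard] at h1 h2
      omega
    rw [Finset.card_union_of_disjoint d3, Finset.card_union_of_disjoint d1,
      Finset.card_union_of_disjoint d2]
    simp only [Finset.card_powersetCard, Finset.card_range]
    rw [Nat.choose_zero_right, Nat.choose_one_right, Nat.choose_self]
    have : n.choose (n - 1) = n := by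
      rw [Nat.choose_symm (by omega : 1 ≤ n), Nat.choose_one_right]
    omega
  -- structural-bad count
  have hstruct : (((Finset.range n).powerset).filter (fun S => (2 ≤ S.card ∧ S.card + 2 ≤ n) ∧
        ¬ ((∃ x ∈ S, ∃ y ∈ Finset.range n \ S, ∃ s ∈ S, s < x ∧ x < y) ∧
           (∃ x ∈ Finset.range n \ S, ∃ y ∈ Finset.range n \ S, ∃ s ∈ S, s < x ∧ x < y)))).card
      = (n - 3) * n := by
    have he : ((Finset.range n).powerset).filter (fun S => (2 ≤ S.card ∧ S.card + 2 ≤ n) ∧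
        ¬ ((∃ x ∈ S, ∃ y ∈ Finset.range n \ S, ∃ s ∈ S, s < x ∧ x < y) ∧
           (∃ x ∈ Finset.range n \ S, ∃ y ∈ Finset.range n \ S, ∃ s ∈ S, s < x ∧ x < y)))
        = Finset.image (phiB n) ((Finset.Ico 2 (n - 1)) ×ˢ (Finset.range n)) := by
      ext S
      simp only [Finset.mem_filter, Finset.mem_powerset, Finset.mem_image, Finset.mem_product,
        Finset.mem_Ico, Finset.mem_range, Prod.exists]
      constructor
      · rintro ⟨hsub, ⟨hk2, hkn⟩, hbad⟩
        obtain ⟨k, j, ⟨h1, h2, h3⟩, heq⟩ := not_good_structure n hn S hsub hk2 hkn hbad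
        exact ⟨k, j, ⟨⟨h1, by omega⟩, h3⟩, heq⟩
      · rintro ⟨k, j, ⟨⟨hk2, hk1⟩, hj⟩, rfl⟩
        have hkn : k + 2 ≤ n := by omega
        refine ⟨phiB_subset n k j hj, ⟨?_, ?_⟩, phiB_not_good n k j hk2 hkn hj⟩
        · rw [phiB_card n k j hk2 hkn hj]; omega
        · rw [phiB_card n k j hk2 hkn hj]; omega
    rw [he, Finset.card_image_of_injOn (phiB_injOn n hn), Finset.card_product,
      Nat.card_Ico, Finset.card_range]
    have h31 : n - 1 - 2 = n - 3 := by omega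
    rw [h31]
  rw [hbad_eq, Finset.card_union_of_disjoint hdisj, hsize, hstruct] at hsplit
  -- arithmetic
  obtain ⟨m, rfl⟩ : ∃ m, n = m + 4 := ⟨n - 4, by omega⟩
  have harith : (m + 4 - 3) * (m + 4) = m * m + 5 * m + 4 := by
    have : m + 4 - 3 = m + 1 := by omega
    rw [this]; ring
  rw [harith] at hsplit
  have : (m + 4) * (m + 4) = m * m + 8 * m + 16 := by ring
  rw [this]
  omega

end MinPerm

/-- The number of minimal permutations with `d` descents of length `d + 2` is
`2^(d+2) - (d+1)(d+2) - 2`. -/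
theorem card_minimal_length_add_two (d : ℕ) (hd : 2 ≤ d) :
    (Nat.card {l : List ℕ // l.Perm (List.range (d + 2)) ∧ IsMinimal d l} : ℤ) =
      2 ^ (d + 2) - ((d : ℤ) + 1) * ((d : ℤ) + 2) - 2 := by
  classical
  have hn : 4 ≤ d + 2 := by omega
  set G : Finset (Finset ℕ) :=
    ((Finset.range (d + 2)).powerset).filter (MinPerm.Good (d + 2)) with hG_def
  have hprops : ∀ S ∈ G, (MinPerm.Phi (d + 2) S).Perm (List.range (d + 2)) ∧
      IsMinimal d (MinPerm.Phi (d + 2) S) := by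
    intro S hS
    rw [hG_def, Finset.mem_filter, Finset.mem_powerset] at hS
    obtain ⟨⟨hperm, hlen, hdes, hera⟩, -⟩ := MinPerm.phi_spec (d + 2) S hS.1 hS.2
    refine ⟨hperm, ?_, ?_⟩
    · rw [hdes]; omega
    · intro i hi
      rw [hlen] at hi
      rw [hera i hi]; omega
  set f : {S // S ∈ G} → {l : List ℕ // l.Perm (List.range (d + 2)) ∧ IsMinimal d l} :=
    fun Sh => ⟨MinPerm.Phi (d + 2) Sh.1, hprops Sh.1 Sh.2⟩ with hf_def
  have hbij : Function.Bijective f := by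
    constructor
    · rintro ⟨S, hS⟩ ⟨S', hS'⟩ h
      rw [hf_def] at h
      simp only [Subtype.mk.injEq] at h
      have hS1 := Finset.mem_filter.1 hS
      have hS1' := Finset.mem_filter.1 hS'
      exact Subtype.ext (MinPerm.phi_inj (d + 2) (Finset.mem_powerset.1 hS1.1)
        (Finset.mem_powerset.1 hS1'.1) hS1.2 hS1'.2 h)
    · rintro ⟨l, hperm, hdes, hera⟩
      obtain ⟨S, hsub, hgood, heq⟩ := MinPerm.exists_good (d + 2) hn l hperm
        (by rw [hdes]; omega) (fun i hi => by rw [hera i hi]; omega)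
      exact ⟨⟨S, Finset.mem_filter.2 ⟨Finset.mem_powerset.2 hsub, hgood⟩⟩, Subtype.ext heq⟩
  have key : Nat.card {l : List ℕ // l.Perm (List.range (d + 2)) ∧ IsMinimal d l} = G.card := by
    rw [← Nat.card_congr (Equiv.ofBijective f hbij), Nat.card_eq_finsetCard]
  rw [key]
  have hcount := MinPerm.count_good (d + 2) hn
  have hz : (G.card : ℤ) + (((d : ℤ) + 2) * ((d : ℤ) + 2) + 2) = 2 ^ (d + 2) + ((d : ℤ) + 2) := by
    exact_mod_cast hcount
  linear_combination hz
end

section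
/- For every d ≥ 1, the d-th Catalan number C_d equals (2d)! times the determinant of the d×d matrix M whose entries are: M_{i,j} = 1/(j − i + 2)! when j ≥ i − 1 (interpreting this as 1/2! on the diagonal, 1/3! on the first superdiagonal, etc., and 1 = 1/1! on the first subdiagonal), M_{i,i-2} = 1 (i.e., entries on the second subdiagonal equal 1/0! = 1), and M_{i,j} = 0 when i > j + 2. Explicitly, C_d = (2d)! · det( m_{i,j} ) with m_{i,j} = 1/(j−i+2)! for j ≥ i−2 (where negative factorial arguments give 0) and 0 otherwise. -/
open Finset

private lemma vander_aux (i j : ℕ) :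
    ∑ k ∈ range (i + 1), Nat.choose 2 (i - k) * Nat.choose j k = (j + 2).choose i := by
  rw [Nat.add_choose_eq, Finset.Nat.sum_antidiagonal_eq_sum_range_succ_mk]
  exact Finset.sum_congr rfl fun k _ => Nat.mul_comm _ _

private lemma prod_fact_aux (d : ℕ) :
    ∏ i ∈ range d, (i + 2).factorial =
      (∏ i ∈ range d, i.factorial) * (d.factorial * (d + 1).factorial) := by
  induction d with
  | zero => simp
  | succ n ih =>
    rw [prod_range_succ, prod_range_succ, ih]
    have h1 : (n + 1).factorial = (n + 1) * n.factorial := Nat.factorial_succ n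
    have h2 : (n + 2).factorial = (n + 2) * (n + 1).factorial := Nat.factorial_succ (n + 1)
    rw [h2]
    ring

private lemma fact_eq_catalan_aux (d : ℕ) :
    (2 * d).factorial = catalan d * (d.factorial * (d + 1).factorial) := by
  have h1 := succ_mul_catalan_eq_centralBinom d
  have h2 := Nat.choose_mul_factorial_mul_factorial
    (Nat.le_mul_of_pos_left d (by norm_num) : d ≤ 2 * d)
  rw [Nat.centralBinom] at h1
  have h3 : 2 * d - d = d := by omega
  rw [h3] at h2
  rw [← h2, ← h1, Nat.factorial_succ]
  ring

/-- A determinantal expression for the Catalan numbers: `C_d` equals `(2d)!`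
times the determinant of the `d × d` matrix whose `(i,j)` entry is
`1/(j - i + 2)!` when `j - i + 2 ≥ 0` (so `1/2!` on the diagonal, `1` on the
first and second subdiagonals) and `0` below the second subdiagonal. -/
theorem catalan_eq_det (d : ℕ) (hd : 1 ≤ d) :
    (catalan d : ℚ) = ((2 * d).factorial : ℚ) *
      Matrix.det (Matrix.of fun i j : Fin d =>
        if (i : ℕ) ≤ (j : ℕ) + 2 then
          (1 : ℚ) / (Nat.factorial ((j : ℕ) + 2 - (i : ℕ)) : ℚ)
        else 0) := by
  set L : Matrix (Fin d) (Fin d) ℚ := Matrix.of fun i k : Fin d =>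
    if (k : ℕ) ≤ (i : ℕ) then
      ((i : ℕ).factorial : ℚ) * (Nat.choose 2 ((i : ℕ) - (k : ℕ)) : ℚ)
    else 0 with hL
  set U : Matrix (Fin d) (Fin d) ℚ := Matrix.of fun k j : Fin d =>
    (Nat.choose (j : ℕ) (k : ℕ) : ℚ) / (Nat.factorial ((j : ℕ) + 2) : ℚ) with hU
  have hM : (Matrix.of fun i j : Fin d =>
      if (i : ℕ) ≤ (j : ℕ) + 2 then
        (1 : ℚ) / (Nat.factorial ((j : ℕ) + 2 - (i : ℕ)) : ℚ)
      else 0) = L * U := by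
    ext i j
    rw [Matrix.mul_apply]
    have step1 : ∑ k : Fin d, L i k * U k j =
        ∑ k ∈ range d, (if k ≤ (i : ℕ) then
          ((i : ℕ).factorial : ℚ) * (Nat.choose 2 ((i : ℕ) - k) : ℚ) else 0) *
          ((Nat.choose (j : ℕ) k : ℚ) / (Nat.factorial ((j : ℕ) + 2) : ℚ)) := by
      rw [← Fin.sum_univ_eq_sum_range]
      rfl
    rw [step1]
    have step2 : ∑ k ∈ range d, (if k ≤ (i : ℕ) then
          ((i : ℕ).factorial : ℚ) * (Nat.choose 2 ((i : ℕ) - k) : ℚ) else 0) *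
          ((Nat.choose (j : ℕ) k : ℚ) / (Nat.factorial ((j : ℕ) + 2) : ℚ)) =
        ∑ k ∈ range ((i : ℕ) + 1),
          ((i : ℕ).factorial : ℚ) * (Nat.choose 2 ((i : ℕ) - k) : ℚ) *
          ((Nat.choose (j : ℕ) k : ℚ) / (Nat.factorial ((j : ℕ) + 2) : ℚ)) := by
      rw [← Finset.sum_subset (Finset.range_subset_range.mpr (by omega : (i : ℕ) + 1 ≤ d))]
      · exact Finset.sum_congr rfl fun k hk => by
          rw [if_pos (by simpa using Nat.lt_succ_iff.mp (Finset.mem_range.mp hk))]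
      · intro k _ hk
        rw [if_neg (by simpa using fun h => hk (Finset.mem_range.mpr (Nat.lt_succ_of_le h)))]
        ring
    rw [step2]
    have step3 : ∑ k ∈ range ((i : ℕ) + 1),
          ((i : ℕ).factorial : ℚ) * (Nat.choose 2 ((i : ℕ) - k) : ℚ) *
          ((Nat.choose (j : ℕ) k : ℚ) / (Nat.factorial ((j : ℕ) + 2) : ℚ)) =
        ((i : ℕ).factorial : ℚ) * (Nat.choose ((j : ℕ) + 2) (i : ℕ) : ℚ) /
          (Nat.factorial ((j : ℕ) + 2) : ℚ) := by
      rw [← vander_aux (i : ℕ) (j : ℕ)]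
      push_cast
      rw [Finset.mul_sum, Finset.sum_div]
      exact Finset.sum_congr rfl fun k _ => by ring
    rw [step3]
    by_cases h : (i : ℕ) ≤ (j : ℕ) + 2
    · rw [Matrix.of_apply, if_pos h]
      have hc := Nat.choose_mul_factorial_mul_factorial h
      have h1 : (Nat.factorial ((j : ℕ) + 2) : ℚ) ≠ 0 := by
        exact_mod_cast (Nat.factorial_pos _).ne'
      have h2 : (Nat.factorial ((j : ℕ) + 2 - (i : ℕ)) : ℚ) ≠ 0 := by
        exact_mod_cast (Nat.factorial_pos _).ne'
      have hcQ : ((Nat.choose ((j : ℕ) + 2) (i : ℕ) : ℚ)) * ((i : ℕ).factorial : ℚ) *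
          ((Nat.factorial ((j : ℕ) + 2 - (i : ℕ))) : ℚ) = ((Nat.factorial ((j : ℕ) + 2)) : ℚ) := by
        exact_mod_cast congrArg (Nat.cast : ℕ → ℚ) hc
      rw [div_eq_div_iff h2 h1]
      linear_combination -hcQ
    · rw [Matrix.of_apply, if_neg h, Nat.choose_eq_zero_of_lt (by omega)]
      simp
  rw [hM, Matrix.det_mul]
  have hdetL : L.det = ∏ i ∈ range d, ((i : ℕ).factorial : ℚ) := by
    rw [Matrix.det_of_lowerTriangular L (fun i j hij => by
      rw [hL, Matrix.of_apply, if_neg (by exact_mod_cast Nat.not_le.mpr hij)])]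
    rw [← Fin.prod_univ_eq_prod_range]
    exact Finset.prod_congr rfl fun i _ => by
      rw [hL, Matrix.of_apply, if_pos le_rfl]
      simp
  have hdetU : U.det = ∏ i ∈ range d, (1 / (Nat.factorial (i + 2) : ℚ)) := by
    rw [Matrix.det_of_upperTriangular (fun i j hij => by
      rw [hU, Matrix.of_apply, Nat.choose_eq_zero_of_lt (by exact_mod_cast hij)]
      simp)]
    rw [← Fin.prod_univ_eq_prod_range]
    exact Finset.prod_congr rfl fun i _ => by
      rw [hU, Matrix.of_apply, Nat.choose_self]
      simp
  rw [hdetL, hdetU]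
  have key : ((2 * d).factorial : ℕ) * ∏ i ∈ range d, (i : ℕ).factorial =
      catalan d * ∏ i ∈ range d, (i + 2).factorial := by
    rw [prod_fact_aux, fact_eq_catalan_aux]
    ring
  have keyQ : ((2 * d).factorial : ℚ) * ∏ i ∈ range d, ((i : ℕ).factorial : ℚ) =
      (catalan d : ℚ) * ∏ i ∈ range d, ((Nat.factorial (i + 2) : ℕ) : ℚ) := by
    exact_mod_cast key
  have hne : ∏ i ∈ range d, ((Nat.factorial (i + 2) : ℕ) : ℚ) ≠ 0 :=
    Finset.prod_ne_zero_iff.mpr fun i _ => by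
      exact_mod_cast (Nat.factorial_pos _).ne'
  rw [show ∏ i ∈ range d, (1 / (Nat.factorial (i + 2) : ℚ)) =
      (∏ i ∈ range d, ((Nat.factorial (i + 2) : ℕ) : ℚ))⁻¹ by
    rw [← Finset.prod_inv_distrib]
    exact Finset.prod_congr rfl fun i _ => (one_div _)]
  field_simp
  linarith [keyQ]
end

section
/- For every d ≥ 3, the following identity holds: Σ_{a=2}^{d-1} (d+3)! · det( [[1/a!, 1/(a+1)!, 1/(d+1)!], [1, 1/2, 1/(d+2−a)!], [1, 1, 1/(d+1−a)!]] ) = binomial(d+3,2)·(2^{d+1} − d − 6) − (d+2)·(2^{d+3} − d² − 7d − 14). -/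
set_option maxHeartbeats 1000000 in
lemma partial_sum_pointwise (a c : ℕ) (ha : 2 ≤ a) (hc : 2 ≤ c) :
    ((a + c + 2).factorial : ℚ) *
        Matrix.det !![(1 : ℚ) / (Nat.factorial a : ℚ),
            (1 : ℚ) / (Nat.factorial (a + 1) : ℚ),
            (1 : ℚ) / (Nat.factorial (a + c) : ℚ);
          1, 1 / 2, (1 : ℚ) / (Nat.factorial (c + 1) : ℚ);
          1, 1, (1 : ℚ) / (Nat.factorial c : ℚ)] =
      (((a + c : ℕ) : ℚ) + 2) * (((a + c : ℕ) : ℚ) + 1) / 2 * ((a + c).choose a : ℚ)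
        - (((a + c : ℕ) : ℚ) + 1) * ((a + c + 2).choose (a + 1) : ℚ)
        + (((a + c : ℕ) : ℚ) + 2) * (((a + c : ℕ) : ℚ) + 1) / 2 := by
  have h1 : (a + c).choose a * a.factorial * c.factorial = (a + c).factorial := by
    have := Nat.choose_mul_factorial_mul_factorial (Nat.le_add_right a c)
    simpa using this
  have h2 : (a + c + 2).choose (a + 1) * (a + 1).factorial * (c + 1).factorial
      = (a + c + 2).factorial := by
    have := Nat.choose_mul_factorial_mul_factorial (show a + 1 ≤ a + c + 2 by omega)
    have hs : a + c + 2 - (a + 1) = c + 1 := by omega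
    rwa [hs] at this
  have fa : ((a.factorial : ℚ)) ≠ 0 := by positivity
  have fc : ((c.factorial : ℚ)) ≠ 0 := by positivity
  have fac : (((a + c).factorial : ℚ)) ≠ 0 := by positivity
  have e1 : ((a + c).choose a : ℚ) = ((a + c).factorial : ℚ) / (a.factorial * c.factorial) := by
    rw [eq_div_iff (by positivity)]
    exact_mod_cast congrArg (Nat.cast : ℕ → ℚ) (by rw [← h1]; ring)
  have e2 : ((a + c + 2).choose (a + 1) : ℚ)
      = ((a + c + 2).factorial : ℚ) / ((a + 1).factorial * (c + 1).factorial) := by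
    rw [eq_div_iff (by positivity)]
    exact_mod_cast congrArg (Nat.cast : ℕ → ℚ) (by rw [← h2]; ring)
  have g1 : ((a + 1).factorial : ℚ) = (a + 1) * a.factorial := by
    rw [Nat.factorial_succ]; push_cast; ring
  have g2 : ((c + 1).factorial : ℚ) = (c + 1) * c.factorial := by
    rw [Nat.factorial_succ]; push_cast; ring
  have g3 : ((a + c + 2).factorial : ℚ)
      = ((a : ℚ) + c + 2) * ((a : ℚ) + c + 1) * ((a + c).factorial : ℚ) := by
    show ((a + c + 1 + 1).factorial : ℚ) = _
    rw [Nat.factorial_succ, Nat.factorial_succ]; push_cast; ring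
  rw [Matrix.det_fin_three]
  simp only [Matrix.of_apply, Matrix.cons_val', Matrix.cons_val_zero, Matrix.cons_val_one,
    Matrix.head_cons, Matrix.cons_val_two, Matrix.tail_cons, Matrix.head_fin_const,
    Matrix.empty_val', Matrix.cons_val_fin_one]
  rw [e1, e2, g3, g1, g2]
  have ha1 : ((a : ℚ) + 1) ≠ 0 := by positivity
  have hc1 : ((c : ℚ) + 1) ≠ 0 := by positivity
  push_cast
  field_simp
  ring

lemma partial_sum_split (f : ℕ → ℚ) (e : ℕ) :
    ∑ a ∈ Finset.range (e + 5), f a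
      = f 0 + f 1 + (∑ a ∈ Finset.Icc 2 (e + 2), f a) + f (e + 3) + f (e + 4) := by
  rw [Finset.sum_range_succ, Finset.sum_range_succ]
  have h1 : Finset.Icc 2 (e + 2) = Finset.Ico 2 (e + 3) := by
    exact (Finset.Ico_add_one_right_eq_Icc (a := 2) (b := e + 2)).symm
  have h2 : ∑ a ∈ Finset.range (e + 3), f a
      = f 0 + f 1 + ∑ a ∈ Finset.Ico 2 (e + 3), f a := by
    rw [Finset.range_eq_Ico,
      ← Finset.sum_Ico_consecutive f (by omega : 0 ≤ 2) (by omega : 2 ≤ e + 3)]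
    have h3 : Finset.Ico 0 2 = Finset.range 2 := by rw [Finset.range_eq_Ico]
    rw [h3, Finset.sum_range_succ, Finset.sum_range_one]
  rw [h1, h2]

lemma partial_sumA (e : ℕ) :
    ∑ a ∈ Finset.Icc 2 (e + 2), ((e + 4).choose a : ℚ)
      = 2 ^ (e + 4) - 2 * (e : ℚ) - 10 := by
  have h0 : ∑ a ∈ Finset.range (e + 5), ((e + 4).choose a : ℚ) = 2 ^ (e + 4) := by
    exact_mod_cast Nat.sum_range_choose (e + 4)
  rw [partial_sum_split (fun a => ((e + 4).choose a : ℚ)) e] at h0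
  have c0 : (e + 4).choose 0 = 1 := Nat.choose_zero_right _
  have c1 : (e + 4).choose 1 = e + 4 := Nat.choose_one_right _
  have c3 : (e + 4).choose (e + 3) = e + 4 := by
    have h := Nat.choose_symm (show 1 ≤ e + 4 by omega)
    have h4 : e + 4 - 1 = e + 3 := by omega
    rw [h4] at h
    rw [h, Nat.choose_one_right]
  have c4 : (e + 4).choose (e + 4) = 1 := Nat.choose_self _
  rw [c0, c1, c3, c4] at h0
  push_cast at h0 ⊢
  linarith

lemma partial_sumB (e : ℕ) :
    ∑ a ∈ Finset.Icc 2 (e + 2), ((e + 6).choose (a + 1) : ℚ)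
      = 2 ^ (e + 6) - (e : ℚ) ^ 2 - 13 * (e : ℚ) - 44 := by
  have hfull : ∑ a ∈ Finset.range (e + 5), ((e + 6).choose (a + 1) : ℚ)
      = 2 ^ (e + 6) - 2 := by
    have h2 : ∑ i ∈ Finset.range (e + 7), ((e + 6).choose i : ℚ) = 2 ^ (e + 6) := by
      exact_mod_cast Nat.sum_range_choose (e + 6)
    rw [Finset.sum_range_succ' (fun i => ((e + 6).choose i : ℚ)) (e + 6)] at h2
    rw [Finset.sum_range_succ (fun i => ((e + 6).choose (i + 1) : ℚ)) (e + 5)] at h2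
    simp only [Nat.choose_zero_right, Nat.choose_self, Nat.cast_one] at h2
    linarith
  rw [partial_sum_split (fun a => ((e + 6).choose (a + 1) : ℚ)) e] at hfull
  have c0 : (e + 6).choose (0 + 1) = e + 6 := Nat.choose_one_right _
  have c1 : ((e + 6).choose (1 + 1) : ℚ) = ((e : ℚ) + 6) * ((e : ℚ) + 5) / 2 := by
    rw [show (1 + 1) = 2 from rfl, Nat.cast_choose_two]
    push_cast; ring
  have c3 : (e + 6).choose (e + 3 + 1) = (e + 6).choose 2 := by
    have h := Nat.choose_symm (show 2 ≤ e + 6 by omega)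
    have h4 : e + 6 - 2 = e + 3 + 1 := by omega
    rw [h4] at h
    exact h
  have c4 : (e + 6).choose (e + 4 + 1) = e + 6 := by
    have h := Nat.choose_symm (show 1 ≤ e + 6 by omega)
    have h5 : e + 6 - 1 = e + 4 + 1 := by omega
    rw [h5] at h
    rw [h, Nat.choose_one_right]
  have c3q : ((e + 6).choose (e + 3 + 1) : ℚ) = ((e : ℚ) + 6) * ((e : ℚ) + 5) / 2 := by
    rw [c3, Nat.cast_choose_two]; push_cast; ring
  rw [c0, c3q, c4, c1] at hfull
  push_cast at hfull ⊢
  linarith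

/-- The partial sum, over triples `(a, 2, c)` with `a, c ≥ 2`, `a + 2 + c = d + 3`
(so `c = d + 1 - a`), of the determinant contributions to `p_{d+3,d}`. -/
theorem partial_sum_b_eq_two (d : ℕ) (hd : 3 ≤ d) :
    ∑ a ∈ Finset.Icc 2 (d - 1),
      ((d + 3).factorial : ℚ) *
        Matrix.det !![(1 : ℚ) / (Nat.factorial a : ℚ),
            (1 : ℚ) / (Nat.factorial (a + 1) : ℚ),
            (1 : ℚ) / (Nat.factorial (d + 1) : ℚ);
          1, 1 / 2, (1 : ℚ) / (Nat.factorial (d + 2 - a) : ℚ);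
          1, 1, (1 : ℚ) / (Nat.factorial (d + 1 - a) : ℚ)] =
      ((d + 3).choose 2 : ℚ) * (2 ^ (d + 1) - (d : ℚ) - 6) -
        ((d : ℚ) + 2) * (2 ^ (d + 3) - (d : ℚ) ^ 2 - 7 * (d : ℚ) - 14) := by
  obtain ⟨e, rfl⟩ : ∃ e, d = e + 3 := ⟨d - 3, by omega⟩
  have hidx : e + 3 - 1 = e + 2 := by omega
  rw [hidx]
  have hterm : ∀ a ∈ Finset.Icc 2 (e + 2),
      ((e + 3 + 3).factorial : ℚ) *
        Matrix.det !![(1 : ℚ) / (Nat.factorial a : ℚ),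
            (1 : ℚ) / (Nat.factorial (a + 1) : ℚ),
            (1 : ℚ) / (Nat.factorial (e + 3 + 1) : ℚ);
          1, 1 / 2, (1 : ℚ) / (Nat.factorial (e + 3 + 2 - a) : ℚ);
          1, 1, (1 : ℚ) / (Nat.factorial (e + 3 + 1 - a) : ℚ)]
      = ((e : ℚ) + 6) * ((e : ℚ) + 5) / 2 * ((e + 4).choose a : ℚ)
          - ((e : ℚ) + 5) * ((e + 6).choose (a + 1) : ℚ)
          + ((e : ℚ) + 6) * ((e : ℚ) + 5) / 2 := by
    intro a haIcc
    simp only [Finset.mem_Icc] at haIcc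
    obtain ⟨c, hc2, hce⟩ : ∃ c, 2 ≤ c ∧ e + 4 = a + c := ⟨e + 4 - a, by omega, by omega⟩
    have hp := partial_sum_pointwise a c haIcc.1 hc2
    rw [← hce] at hp
    rw [show e + 4 + 2 = e + 6 by omega] at hp
    rw [show e + 3 + 3 = e + 6 by omega, show e + 3 + 1 = e + 4 by omega,
      show e + 3 + 2 - a = c + 1 by omega, show e + 3 + 1 - a = c by omega]
    rw [hp]
    push_cast
    ring
  rw [Finset.sum_congr rfl hterm]
  have hsplit : ∑ a ∈ Finset.Icc 2 (e + 2),
      (((e : ℚ) + 6) * ((e : ℚ) + 5) / 2 * ((e + 4).choose a : ℚ)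
        - ((e : ℚ) + 5) * ((e + 6).choose (a + 1) : ℚ)
        + ((e : ℚ) + 6) * ((e : ℚ) + 5) / 2)
      = ((e : ℚ) + 6) * ((e : ℚ) + 5) / 2
            * (∑ a ∈ Finset.Icc 2 (e + 2), ((e + 4).choose a : ℚ))
        - ((e : ℚ) + 5) * (∑ a ∈ Finset.Icc 2 (e + 2), ((e + 6).choose (a + 1) : ℚ))
        + ((e : ℚ) + 1) * (((e : ℚ) + 6) * ((e : ℚ) + 5) / 2) := by
    rw [Finset.sum_add_distrib, Finset.sum_sub_distrib, ← Finset.mul_sum, ← Finset.mul_sum,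
      Finset.sum_const, Nat.card_Icc]
    push_cast
    ring
  rw [hsplit, partial_sumA, partial_sumB]
  have hch : ((e + 3 + 3).choose 2 : ℚ) = ((e : ℚ) + 6) * ((e : ℚ) + 5) / 2 := by
    rw [show e + 3 + 3 = e + 6 by omega, Nat.cast_choose_two]
    push_cast; ring
  rw [hch]
  push_cast
  ring
end

section
/- For every d ≥ 3, the following identity holds: Σ over triples (a,b,c) with a,c ≥ 2, b ≥ 3 and a+b+c = d+3 of (d+3)! · det( [[1/a!, 1/(a+b−1)!, 1/(d+1)!], [1, 1/b!, 1/(b+c−1)!], [0, 1, 1/c!]] ) = 3^{d+3} − (5d² + 13d + 18)·2^d + (1/2)d⁴ + 2d³ + (3/2)d² − 4d − 9. -/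
open Finset

/-! ### Binomial sum helper lemmas -/

lemma sum_choose_q (m : ℕ) : ∑ k ∈ range (m+1), ((m.choose k : ℕ) : ℚ) = 2^m := by
  have h := Nat.sum_range_choose m
  exact_mod_cast congrArg (Nat.cast : ℕ → ℚ) h

lemma sum_k_choose_q (m : ℕ) :
    ∑ k ∈ range (m+2), (k : ℚ) * ((m+1).choose k : ℕ) = (m+1) * 2^m := by
  rw [Finset.sum_range_succ']
  have h : ∀ j, ((j+1 : ℕ) : ℚ) * (((m+1).choose (j+1) : ℕ) : ℚ)
      = (m+1) * ((m.choose j : ℕ) : ℚ) := by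
    intro j
    have := Nat.add_one_mul_choose_eq m j
    have h2 : ((Nat.succ m * m.choose j : ℕ) : ℚ) = (((m+1).choose (j+1) * (j+1) : ℕ) : ℚ) :=
      congrArg (Nat.cast : ℕ → ℚ) this
    push_cast at h2 ⊢
    linarith [h2]
  calc (∑ j ∈ range (m+1), ((j+1 : ℕ) : ℚ) * ((m+1).choose (j+1) : ℕ)) + (0:ℚ) * ((m+1).choose 0 : ℕ)
      = ∑ j ∈ range (m+1), (m+1 : ℚ) * ((m.choose j : ℕ) : ℚ) := by
        rw [zero_mul, add_zero]; exact Finset.sum_congr rfl fun j _ => h j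
    _ = (m+1) * 2^m := by rw [← Finset.mul_sum, sum_choose_q]

lemma sum_kk_choose_q (m : ℕ) :
    ∑ k ∈ range (m+3), (k : ℚ) * ((k:ℚ) - 1) * ((m+2).choose k : ℕ) = (m+2) * ((m+1) * 2^m) := by
  rw [Finset.sum_range_succ', Finset.sum_range_succ']
  have h : ∀ j : ℕ, ((j+1+1 : ℕ) : ℚ) * (((j+1+1:ℕ):ℚ) - 1) * (((m+2).choose (j+1+1) : ℕ) : ℚ)
      = (m+2) * ((m+1) * ((m.choose j : ℕ) : ℚ)) := by
    intro j
    have h1 := Nat.add_one_mul_choose_eq (m+1) (j+1)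
    have h2 := Nat.add_one_mul_choose_eq m j
    have h1' : ((Nat.succ (m+1) * (m+1).choose (j+1) : ℕ) : ℚ) = (((m+2).choose (j+2) * (j+2) : ℕ) : ℚ) :=
      congrArg _ h1
    have h2' : ((Nat.succ m * m.choose j : ℕ) : ℚ) = (((m+1).choose (j+1) * (j+1) : ℕ) : ℚ) :=
      congrArg _ h2
    push_cast at h1' h2' ⊢
    have hj2 : ((j:ℚ)+1+1) ≠ 0 := by positivity
    have hj1 : ((j:ℚ)+1) ≠ 0 := by positivity
    field_simp at h1' h2' ⊢
    nlinarith [h1', h2']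
  simp only [h]
  push_cast
  rw [← Finset.mul_sum, ← Finset.mul_sum, sum_choose_q]
  ring

lemma sum_choose_pow_q (m : ℕ) :
    ∑ k ∈ range (m+1), ((m.choose k : ℕ) : ℚ) * 2^(m-k) = 3^m := by
  have h := add_pow (1:ℚ) 2 m
  norm_num at h
  rw [h]
  exact Finset.sum_congr rfl fun k _ => by ring

lemma choose_two_q (n : ℕ) : ((n.choose 2 : ℕ) : ℚ) = n*(n-1)/2 := by
  induction n with
  | zero => simp
  | succ n ih =>
    rw [Nat.choose_succ_succ]
    push_cast [ih, Nat.choose_one_right]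
    ring

lemma choose_three_q (n : ℕ) : ((n.choose 3 : ℕ) : ℚ) = n*(n-1)*(n-2)/6 := by
  induction n with
  | zero => simp
  | succ n ih =>
    rw [Nat.choose_succ_succ]
    push_cast [ih, choose_two_q]
    ring

lemma choose_four_q (n : ℕ) : ((n.choose 4 : ℕ) : ℚ) = n*(n-1)*(n-2)*(n-3)/24 := by
  induction n with
  | zero => simp
  | succ n ih =>
    rw [Nat.choose_succ_succ]
    push_cast [ih, choose_three_q]
    ring

lemma triangle_sum (h : ℕ → ℚ) (m : ℕ) :
    ∑ i ∈ range m, ∑ j ∈ range (m - i), h (i+j)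
      = ∑ s ∈ range m, ((s:ℚ)+1) * h s := by
  induction m with
  | zero => simp
  | succ m ih =>
    rw [Finset.sum_range_succ (fun s => ((s:ℚ)+1) * h s), Finset.sum_range_succ]
    have h1 : ∀ i ∈ range m, ∑ j ∈ range (m+1-i), h (i+j)
        = (∑ j ∈ range (m-i), h (i+j)) + h m := by
      intro i hi
      rw [Finset.mem_range] at hi
      rw [show m+1-i = (m-i)+1 by omega, Finset.sum_range_succ,
        show i + (m-i) = m by omega]
    rw [Finset.sum_congr rfl h1, Finset.sum_add_distrib, ih, Finset.sum_const,
      Finset.card_range, show m+1-m = 1 by omega, Finset.sum_range_one, add_zero,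
      nsmul_eq_mul]
    ring

lemma shift_sum (f : ℕ → ℚ) (e a : ℕ) :
    ∑ i ∈ range e, f (i+a) = (∑ k ∈ range (e+a), f k) - ∑ k ∈ range a, f k := by
  induction e with
  | zero => simp
  | succ e ih =>
    rw [Finset.sum_range_succ, ih, show e+1+a = (e+a)+1 by omega, Finset.sum_range_succ]
    ring

lemma peel5 (f : ℕ → ℚ) (e : ℕ) : ∑ k ∈ range (e+7), f k
    = (∑ k ∈ range (e+2), f k) + f (e+2) + f (e+3) + f (e+4) + f (e+5) + f (e+6) := by
  rw [show e+7 = (e+6)+1 from rfl, Finset.sum_range_succ,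
      show e+6 = (e+5)+1 from rfl, Finset.sum_range_succ,
      show e+5 = (e+4)+1 from rfl, Finset.sum_range_succ,
      show e+4 = (e+3)+1 from rfl, Finset.sum_range_succ,
      show e+3 = (e+2)+1 from rfl, Finset.sum_range_succ]

lemma peel4 (f : ℕ → ℚ) (e : ℕ) : ∑ k ∈ range (e+6), f k
    = (∑ k ∈ range (e+2), f k) + f (e+2) + f (e+3) + f (e+4) + f (e+5) := by
  rw [show e+6 = (e+5)+1 from rfl, Finset.sum_range_succ,
      show e+5 = (e+4)+1 from rfl, Finset.sum_range_succ,
      show e+4 = (e+3)+1 from rfl, Finset.sum_range_succ,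
      show e+3 = (e+2)+1 from rfl, Finset.sum_range_succ]

lemma peel2 (f : ℕ → ℚ) (e : ℕ) : ∑ k ∈ range (e+6), f k
    = (∑ k ∈ range (e+4), f k) + f (e+4) + f (e+5) := by
  rw [show e+6 = (e+5)+1 from rfl, Finset.sum_range_succ,
      show e+5 = (e+4)+1 from rfl, Finset.sum_range_succ]

lemma sum_range_two_q (f : ℕ → ℚ) : ∑ k ∈ range 2, f k = f 0 + f 1 := by
  rw [show (2:ℕ) = 1+1 from rfl, Finset.sum_range_succ, Finset.sum_range_one]

lemma sum_range_four_q (f : ℕ → ℚ) : ∑ k ∈ range 4, f k = f 0 + f 1 + f 2 + f 3 := by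
  rw [show (4:ℕ) = 3+1 from rfl, Finset.sum_range_succ,
      show (3:ℕ) = 2+1 from rfl, Finset.sum_range_succ,
      show (2:ℕ) = 1+1 from rfl, Finset.sum_range_succ, Finset.sum_range_one]

/-! ### boundary choose values -/

lemma choose_symm_q (e k : ℕ) (h : k ≤ 6) :
    ((e+6).choose (e+6-k) : ℕ) = ((e+6).choose k : ℕ) := Nat.choose_symm (by omega)

/-! ### summand functions -/

def g1a (e k : ℕ) : ℚ := (((e+6).choose k : ℕ) : ℚ) * 2^(e+6-k)

def g1b (α β γ : ℚ) (e k : ℕ) : ℚ := (α + β*(k:ℚ) + γ*(k:ℚ)*((k:ℚ)-1)) * (((e+6).choose k : ℕ) : ℚ)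

def g2 (e k : ℕ) : ℚ := ((e:ℚ)+2-(k:ℚ)) * (((e+5).choose k : ℕ) : ℚ)

def g3 (e k : ℕ) : ℚ := ((k:ℚ)-3) * (((e+5).choose k : ℕ) : ℚ)

lemma full1a (e : ℕ) : ∑ k ∈ range (e+7), g1a e k = 3^(e+6) := by
  have h := sum_choose_pow_q (e+6)
  rw [show e+7 = (e+6)+1 from rfl]
  exact h

lemma full1b (e : ℕ) (α β γ : ℚ) : ∑ k ∈ range (e+7), g1b α β γ e k
    = α*2^(e+6) + β*((e+6)*2^(e+5)) + γ*((e+6)*((e+5)*2^(e+4))) := by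
  have h1 : ∑ k ∈ range (e+7), (((e+6).choose k : ℕ) : ℚ) = 2^(e+6) := by
    rw [show e+7 = (e+6)+1 from rfl]; exact sum_choose_q (e+6)
  have h2 : ∑ k ∈ range (e+7), (k:ℚ) * (((e+6).choose k : ℕ) : ℚ) = (e+6)*2^(e+5) := by
    have := sum_k_choose_q (e+5)
    rw [show e+7 = (e+5)+2 from rfl]
    rw [show ((e:ℚ)+6) = ((e:ℚ)+5+1) by ring]
    convert this using 2 <;> push_cast <;> ring
  have h3 : ∑ k ∈ range (e+7), (k:ℚ) * ((k:ℚ)-1) * (((e+6).choose k : ℕ) : ℚ)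
      = (e+6)*((e+5)*2^(e+4)) := by
    have := sum_kk_choose_q (e+4)
    rw [show e+7 = (e+4)+3 from rfl]
    rw [show ((e:ℚ)+6) = ((e:ℚ)+4+2) by ring, show ((e:ℚ)+5) = ((e:ℚ)+4+1) by ring]
    convert this using 2 <;> push_cast <;> ring
  have hs : ∀ k ∈ range (e+7), g1b α β γ e k
      = α * (((e+6).choose k : ℕ) : ℚ) + β * ((k:ℚ) * (((e+6).choose k : ℕ) : ℚ))
        + γ * ((k:ℚ) * ((k:ℚ)-1) * (((e+6).choose k : ℕ) : ℚ)) := by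
    intro k _; unfold g1b; ring
  rw [Finset.sum_congr rfl hs, Finset.sum_add_distrib, Finset.sum_add_distrib,
    ← Finset.mul_sum, ← Finset.mul_sum, ← Finset.mul_sum, h1, h2, h3]

lemma full2 (e : ℕ) : ∑ k ∈ range (e+6), g2 e k = ((e:ℚ)+2)*2^(e+5) - (e+5)*2^(e+4) := by
  have h1 : ∑ k ∈ range (e+6), (((e+5).choose k : ℕ) : ℚ) = 2^(e+5) := by
    rw [show e+6 = (e+5)+1 from rfl]; exact sum_choose_q (e+5)
  have h2 : ∑ k ∈ range (e+6), (k:ℚ) * (((e+5).choose k : ℕ) : ℚ) = (e+5)*2^(e+4) := by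
    have := sum_k_choose_q (e+4)
    rw [show e+6 = (e+4)+2 from rfl]
    rw [show ((e:ℚ)+5) = ((e:ℚ)+4+1) by ring]
    convert this using 2 <;> push_cast <;> ring
  have hs : ∀ k ∈ range (e+6), g2 e k
      = ((e:ℚ)+2) * (((e+5).choose k : ℕ) : ℚ) - (k:ℚ) * (((e+5).choose k : ℕ) : ℚ) := by
    intro k _; unfold g2; ring
  rw [Finset.sum_congr rfl hs, Finset.sum_sub_distrib, ← Finset.mul_sum, h1, h2]

lemma full3 (e : ℕ) : ∑ k ∈ range (e+6), g3 e k = ((e:ℚ)+5)*2^(e+4) - 3*2^(e+5) := by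
  have h1 : ∑ k ∈ range (e+6), (((e+5).choose k : ℕ) : ℚ) = 2^(e+5) := by
    rw [show e+6 = (e+5)+1 from rfl]; exact sum_choose_q (e+5)
  have h2 : ∑ k ∈ range (e+6), (k:ℚ) * (((e+5).choose k : ℕ) : ℚ) = (e+5)*2^(e+4) := by
    have := sum_k_choose_q (e+4)
    rw [show e+6 = (e+4)+2 from rfl]
    rw [show ((e:ℚ)+5) = ((e:ℚ)+4+1) by ring]
    convert this using 2 <;> push_cast <;> ring
  have hs : ∀ k ∈ range (e+6), g3 e k
      = (k:ℚ) * (((e+5).choose k : ℕ) : ℚ) - 3 * (((e+5).choose k : ℕ) : ℚ) := by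
    intro k _; unfold g3; ring
  rw [Finset.sum_congr rfl hs, Finset.sum_sub_distrib, ← Finset.mul_sum, h1, h2]

/-! ### evaluated single sums -/

lemma S1 (e : ℕ) : ∑ i ∈ range e, g1a e (i+2)
    = 3^(e+6) - 2^(e+6) - ((e:ℚ)+6)*2^(e+5)
      - (16*(((e:ℚ)+6)*((e:ℚ)+5)*((e:ℚ)+4)*((e:ℚ)+3)/24)
         + 8*(((e:ℚ)+6)*((e:ℚ)+5)*((e:ℚ)+4)/6)
         + 4*(((e:ℚ)+6)*((e:ℚ)+5)/2) + 2*((e:ℚ)+6) + 1) := by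
  have hs := shift_sum (g1a e) e 2
  have hp := peel5 (g1a e) e
  have hf := full1a e
  have h2 := sum_range_two_q (g1a e)
  have b0 : g1a e 0 = 2^(e+6) := by unfold g1a; norm_num
  have b1 : g1a e 1 = ((e:ℚ)+6) * 2^(e+5) := by
    unfold g1a
    rw [Nat.choose_one_right, show e+6-1 = e+5 by omega]
    push_cast; ring
  have b2 : g1a e (e+2) = (((e:ℚ)+6)*((e:ℚ)+5)*((e:ℚ)+4)*((e:ℚ)+3)/24) * 16 := by
    unfold g1a
    rw [show e+6-(e+2) = 4 by omega, show e+2 = e+6-4 by omega,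
      Nat.choose_symm (by omega), choose_four_q]
    push_cast; ring
  have b3 : g1a e (e+3) = (((e:ℚ)+6)*((e:ℚ)+5)*((e:ℚ)+4)/6) * 8 := by
    unfold g1a
    rw [show e+6-(e+3) = 3 by omega, show e+3 = e+6-3 by omega,
      Nat.choose_symm (by omega), choose_three_q]
    push_cast; ring
  have b4 : g1a e (e+4) = (((e:ℚ)+6)*((e:ℚ)+5)/2) * 4 := by
    unfold g1a
    rw [show e+6-(e+4) = 2 by omega, show e+4 = e+6-2 by omega,
      Nat.choose_symm (by omega), choose_two_q]
    push_cast; ring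
  have b5 : g1a e (e+5) = ((e:ℚ)+6) * 2 := by
    unfold g1a
    rw [show e+6-(e+5) = 1 by omega, show e+5 = e+6-1 by omega,
      Nat.choose_symm (by omega), Nat.choose_one_right]
    push_cast; ring
  have b6 : g1a e (e+6) = 1 := by
    unfold g1a
    rw [show e+6-(e+6) = 0 by omega, Nat.choose_self]
    norm_num
  rw [hs, h2]
  linarith [hp, hf]

lemma S2 (e : ℕ) (α β γ : ℚ) : ∑ i ∈ range e, g1b α β γ e (i+2)
    = α*2^(e+6) + β*(((e:ℚ)+6)*2^(e+5)) + γ*(((e:ℚ)+6)*(((e:ℚ)+5)*2^(e+4)))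
      - (α + (α+β)*((e:ℚ)+6)
        + (α+β*((e:ℚ)+2)+γ*((e:ℚ)+2)*((e:ℚ)+1))*(((e:ℚ)+6)*((e:ℚ)+5)*((e:ℚ)+4)*((e:ℚ)+3)/24)
        + (α+β*((e:ℚ)+3)+γ*((e:ℚ)+3)*((e:ℚ)+2))*(((e:ℚ)+6)*((e:ℚ)+5)*((e:ℚ)+4)/6)
        + (α+β*((e:ℚ)+4)+γ*((e:ℚ)+4)*((e:ℚ)+3))*(((e:ℚ)+6)*((e:ℚ)+5)/2)
        + (α+β*((e:ℚ)+5)+γ*((e:ℚ)+5)*((e:ℚ)+4))*((e:ℚ)+6)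
        + (α+β*((e:ℚ)+6)+γ*((e:ℚ)+6)*((e:ℚ)+5))) := by
  have hs := shift_sum (g1b α β γ e) e 2
  have hp := peel5 (g1b α β γ e) e
  have hf := full1b e α β γ
  have h2 := sum_range_two_q (g1b α β γ e)
  have b0 : g1b α β γ e 0 = α := by unfold g1b; norm_num
  have b1 : g1b α β γ e 1 = (α+β)*((e:ℚ)+6) := by
    unfold g1b
    rw [Nat.choose_one_right]
    push_cast; ring
  have b2 : g1b α β γ e (e+2)
      = (α+β*((e:ℚ)+2)+γ*((e:ℚ)+2)*((e:ℚ)+1))*(((e:ℚ)+6)*((e:ℚ)+5)*((e:ℚ)+4)*((e:ℚ)+3)/24) := by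
    unfold g1b
    rw [show e+2 = e+6-4 by omega, Nat.choose_symm (by omega), choose_four_q]
    push_cast; ring
  have b3 : g1b α β γ e (e+3)
      = (α+β*((e:ℚ)+3)+γ*((e:ℚ)+3)*((e:ℚ)+2))*(((e:ℚ)+6)*((e:ℚ)+5)*((e:ℚ)+4)/6) := by
    unfold g1b
    rw [show e+3 = e+6-3 by omega, Nat.choose_symm (by omega), choose_three_q]
    push_cast; ring
  have b4 : g1b α β γ e (e+4)
      = (α+β*((e:ℚ)+4)+γ*((e:ℚ)+4)*((e:ℚ)+3))*(((e:ℚ)+6)*((e:ℚ)+5)/2) := by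
    unfold g1b
    rw [show e+4 = e+6-2 by omega, Nat.choose_symm (by omega), choose_two_q]
    push_cast; ring
  have b5 : g1b α β γ e (e+5)
      = (α+β*((e:ℚ)+5)+γ*((e:ℚ)+5)*((e:ℚ)+4))*((e:ℚ)+6) := by
    unfold g1b
    rw [show e+5 = e+6-1 by omega, Nat.choose_symm (by omega), Nat.choose_one_right]
    push_cast; ring
  have b6 : g1b α β γ e (e+6)
      = (α+β*((e:ℚ)+6)+γ*((e:ℚ)+6)*((e:ℚ)+5)) := by
    unfold g1b
    rw [Nat.choose_self]
    push_cast; ring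
  rw [hs, h2]
  linarith [hp, hf]

lemma S3 (e : ℕ) : ∑ i ∈ range e, g2 e (i+2)
    = ((e:ℚ)+2)*2^(e+5) - ((e:ℚ)+5)*2^(e+4)
      - (((e:ℚ)+2) + ((e:ℚ)+1)*((e:ℚ)+5) - ((e:ℚ)+5)*((e:ℚ)+4)/2 - 2*((e:ℚ)+5) - 3) := by
  have hs := shift_sum (g2 e) e 2
  have hp := peel4 (g2 e) e
  have hf := full2 e
  have h2 := sum_range_two_q (g2 e)
  have b0 : g2 e 0 = (e:ℚ)+2 := by unfold g2; norm_num
  have b1 : g2 e 1 = ((e:ℚ)+1)*((e:ℚ)+5) := by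
    unfold g2
    rw [Nat.choose_one_right]
    push_cast; ring
  have b2 : g2 e (e+2) = 0 := by
    unfold g2
    push_cast; ring
  have b3 : g2 e (e+3) = -(((e:ℚ)+5)*((e:ℚ)+4)/2) := by
    unfold g2
    rw [show e+3 = e+5-2 by omega, Nat.choose_symm (by omega), choose_two_q]
    push_cast; ring
  have b4 : g2 e (e+4) = -(2*((e:ℚ)+5)) := by
    unfold g2
    rw [show e+4 = e+5-1 by omega, Nat.choose_symm (by omega), Nat.choose_one_right]
    push_cast; ring
  have b5 : g2 e (e+5) = -3 := by
    unfold g2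
    rw [Nat.choose_self]
    push_cast; ring
  rw [hs, h2]
  linarith [hp, hf]

lemma S4 (e : ℕ) : ∑ s ∈ range e, g3 e (s+4)
    = ((e:ℚ)+5)*2^(e+4) - 3*2^(e+5)
      + 3 + 2*((e:ℚ)+5) + ((e:ℚ)+5)*((e:ℚ)+4)/2 - ((e:ℚ)+1)*((e:ℚ)+5) - ((e:ℚ)+2) := by
  have hs := shift_sum (g3 e) e 4
  have hp := peel2 (g3 e) e
  have hf := full3 e
  have h4 := sum_range_four_q (g3 e)
  have b0 : g3 e 0 = -3 := by unfold g3; norm_num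
  have b1 : g3 e 1 = -(2*((e:ℚ)+5)) := by
    unfold g3
    rw [Nat.choose_one_right]
    push_cast; ring
  have b2 : g3 e 2 = -(((e:ℚ)+5)*((e:ℚ)+4)/2) := by
    unfold g3
    rw [choose_two_q]
    push_cast; ring
  have b3 : g3 e 3 = 0 := by
    unfold g3
    push_cast; ring
  have b4 : g3 e (e+4) = ((e:ℚ)+1)*((e:ℚ)+5) := by
    unfold g3
    rw [show e+4 = e+5-1 by omega, Nat.choose_symm (by omega), Nat.choose_one_right]
    push_cast; ring
  have b5 : g3 e (e+5) = ((e:ℚ)+2) := by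
    unfold g3
    rw [Nat.choose_self]
    push_cast; ring
  rw [hs, h4]
  linarith [hp, hf]

lemma S5 (e : ℕ) : ∑ i ∈ range e, ((e-i : ℕ) : ℚ) = (e:ℚ)*((e:ℚ)+1)/2 := by
  induction e with
  | zero => simp
  | succ e ih =>
    have hshift : ∑ i ∈ range (e+1), ((e+1-i : ℕ) : ℚ)
        = (∑ i ∈ range e, ((e-i : ℕ) : ℚ)) + ∑ i ∈ range e, 1 + 1 := by
      rw [Finset.sum_range_succ, show e+1-e = 1 by omega]
      rw [← Finset.sum_add_distrib]
      congr 1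
      refine Finset.sum_congr rfl fun i hi => ?_
      rw [Finset.mem_range] at hi
      rw [show e+1-i = (e-i)+1 by omega]
      push_cast [show i ≤ e by omega]
      ring
    rw [hshift, ih, Finset.sum_const, Finset.card_range, nsmul_eq_mul]
    push_cast; ring

lemma sum_range_three_q (f : ℕ → ℚ) : ∑ k ∈ range 3, f k = f 0 + f 1 + f 2 := by
  rw [show (3:ℕ) = 2+1 from rfl, Finset.sum_range_succ,
      show (2:ℕ) = 1+1 from rfl, Finset.sum_range_succ, Finset.sum_range_one]

def gc (m k : ℕ) : ℚ := (((m+4).choose k : ℕ) : ℚ)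

lemma inner1 (m : ℕ) : ∑ j ∈ range m, gc m (j+3)
    = 2^(m+4) - (((m:ℚ)+4)*((m:ℚ)+3)/2 + 2*((m:ℚ)+4) + 2) := by
  have hs := shift_sum (gc m) m 3
  have h3 := sum_range_three_q (gc m)
  have hfull : ∑ k ∈ range (m+5), gc m k = 2^(m+4) := by
    rw [show m+5 = (m+4)+1 from rfl]; exact sum_choose_q (m+4)
  have hp : ∑ k ∈ range (m+5), gc m k
      = (∑ k ∈ range (m+3), gc m k) + gc m (m+3) + gc m (m+4) := by
    rw [show m+5 = (m+4)+1 from rfl, Finset.sum_range_succ,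
        show m+4 = (m+3)+1 from rfl, Finset.sum_range_succ]
  have b0 : gc m 0 = 1 := by unfold gc; norm_num
  have b1 : gc m 1 = (m:ℚ)+4 := by
    unfold gc; rw [Nat.choose_one_right]; push_cast; ring
  have b2 : gc m 2 = ((m:ℚ)+4)*((m:ℚ)+3)/2 := by
    unfold gc; rw [choose_two_q]; push_cast; ring
  have b3 : gc m (m+3) = (m:ℚ)+4 := by
    unfold gc
    rw [show m+3 = m+4-1 by omega, Nat.choose_symm (by omega), Nat.choose_one_right]
    push_cast; ring
  have b4 : gc m (m+4) = 1 := by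
    unfold gc; rw [Nat.choose_self]; norm_num
  rw [hs, h3]
  linarith [hp, hfull]

/-! ### the three main double/single sums -/

lemma sumD1 (e : ℕ) :
    ∑ i ∈ range e, ∑ j ∈ range (e-i),
        (((e+6).choose (i+2) : ℕ) : ℚ) * (((e+4-i).choose (j+3) : ℕ) : ℚ)
    = 729*3^e + (-1008 - 184*(e:ℚ) - 8*(e:ℚ)^2)*2^e
      + (279 + 124*(e:ℚ) + 19*(e:ℚ)^2 + (e:ℚ)^3) := by
  have hin : ∀ i ∈ range e,
      ∑ j ∈ range (e-i), (((e+6).choose (i+2) : ℕ) : ℚ) * (((e+4-i).choose (j+3) : ℕ) : ℚ)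
      = g1a e (i+2) - g1b (((e:ℚ)^2+15*(e:ℚ)+58)/2) (-((e:ℚ)+7)) (1/2) e (i+2) := by
    intro i hi
    rw [Finset.mem_range] at hi
    have hstep : ∀ j ∈ range (e-i), (((e+6).choose (i+2) : ℕ) : ℚ) * (((e+4-i).choose (j+3) : ℕ) : ℚ)
        = (((e+6).choose (i+2) : ℕ) : ℚ) * gc (e-i) (j+3) := by
      intro j _
      unfold gc
      rw [show (e-i)+4 = e+4-i by omega]
    rw [Finset.sum_congr rfl hstep, ← Finset.mul_sum, inner1]
    unfold g1a g1b
    rw [show e+6-(i+2) = (e-i)+4 by omega]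
    rw [Nat.cast_sub (le_of_lt hi)]
    push_cast
    ring
  rw [Finset.sum_congr rfl hin, Finset.sum_sub_distrib, S1, S2]
  ring

lemma sumD2 (e : ℕ) :
    ∑ i ∈ range e, ((e-i : ℕ) : ℚ) * (((e+5).choose (i+2) : ℕ) : ℚ)
    = (16*(e:ℚ) - 16)*2^e + 16 - (e:ℚ)/2 - (e:ℚ)^2/2 := by
  have hin : ∀ i ∈ range e, ((e-i : ℕ) : ℚ) * (((e+5).choose (i+2) : ℕ) : ℚ) = g2 e (i+2) := by
    intro i hi
    rw [Finset.mem_range] at hi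
    unfold g2
    rw [Nat.cast_sub (le_of_lt hi)]
    push_cast
    ring
  rw [Finset.sum_congr rfl hin, S3]
  ring

lemma sumD3 (e : ℕ) :
    ∑ s ∈ range e, ((s : ℚ)+1) * (((e+5).choose (s+4) : ℕ) : ℚ)
    = (16*(e:ℚ) - 16)*2^e + 16 - (e:ℚ)/2 - (e:ℚ)^2/2 := by
  have hin : ∀ s ∈ range e, ((s : ℚ)+1) * (((e+5).choose (s+4) : ℕ) : ℚ) = g3 e (s+4) := by
    intro s _
    unfold g3
    push_cast
    ring
  rw [Finset.sum_congr rfl hin, S4]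
  ring

/-! ### determinant evaluation -/

lemma detv (x y z u v w : ℚ) : Matrix.det !![x, y, z; 1, u, v; 0, 1, w]
    = x*(u*w) - x*v - y*w + z := by
  rw [Matrix.det_fin_three]
  norm_num [Matrix.cons_val_zero, Matrix.cons_val_one, Matrix.cons_val_two, Matrix.tail_cons, Matrix.head_cons]
  ring

lemma key (e i j : ℕ) (hij : i + j < e) :
    ((e+6).factorial : ℚ) *
        Matrix.det !![(1 : ℚ) / (Nat.factorial (i+2) : ℚ),
            (1 : ℚ) / (Nat.factorial ((i+2) + (j+3) - 1) : ℚ),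
            (1 : ℚ) / (Nat.factorial (e + 4) : ℚ);
          1, (1 : ℚ) / (Nat.factorial (j+3) : ℚ),
            (1 : ℚ) / (Nat.factorial ((j+3) + (e+6-(i+2)-(j+3)) - 1) : ℚ);
          0, 1, (1 : ℚ) / (Nat.factorial (e+6-(i+2)-(j+3)) : ℚ)]
    = (((e+6).choose (i+2) : ℕ) : ℚ) * (((e+4-i).choose (j+3) : ℕ) : ℚ)
      - (e+6) * (((e+5).choose (i+2) : ℕ) : ℚ)
      - (e+6) * (((e+5).choose (i+j+4) : ℕ) : ℚ)
      + (e+6) * (e+5) := by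
  rw [show (i+2) + (j+3) - 1 = i+j+4 by omega,
      show e+6-(i+2)-(j+3) = e+1-(i+j) by omega,
      show (j+3) + (e+1-(i+j)) - 1 = e+3-i by omega]
  rw [detv]
  rw [Nat.cast_choose ℚ (show i+2 ≤ e+6 by omega),
      Nat.cast_choose ℚ (show j+3 ≤ e+4-i by omega),
      Nat.cast_choose ℚ (show i+2 ≤ e+5 by omega),
      Nat.cast_choose ℚ (show i+j+4 ≤ e+5 by omega),
      show e+6-(i+2) = e+4-i by omega, show (e+4-i)-(j+3) = e+1-(i+j) by omega,
      show (e+5)-(i+2) = e+3-i by omega, show (e+5)-(i+j+4) = e+1-(i+j) by omega]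
  have hf6 : ((e+6).factorial : ℚ) = (e+6) * (e+5).factorial := by
    rw [show e+6 = (e+5)+1 from rfl, Nat.factorial_succ]; push_cast; ring
  have hf5 : ((e+5).factorial : ℚ) = (e+5) * (e+4).factorial := by
    rw [show e+5 = (e+4)+1 from rfl, Nat.factorial_succ]; push_cast; ring
  rw [hf6, hf5]
  have nz : ∀ n : ℕ, ((n.factorial : ℕ) : ℚ) ≠ 0 := fun n =>
    Nat.cast_ne_zero.mpr (Nat.factorial_ne_zero n)
  field_simp

/-! ### structural reduction of the filtered sum -/

lemma reduce3 (e : ℕ) (f : ℕ → ℕ → ℕ → ℚ) :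
    ∑ x ∈ (Finset.range (e + 7) ×ˢ Finset.range (e + 7) ×ˢ Finset.range (e + 7)).filter
        (fun x => 2 ≤ x.1 ∧ 3 ≤ x.2.1 ∧ 2 ≤ x.2.2 ∧ x.1 + x.2.1 + x.2.2 = e + 6),
      f x.1 x.2.1 x.2.2
    = ∑ a ∈ range (e+7), ∑ b ∈ range (e+7),
        if 2 ≤ a ∧ 3 ≤ b ∧ a + b ≤ e + 4 then f a b (e+6-a-b) else 0 := by
  rw [Finset.sum_filter, Finset.sum_product]
  refine Finset.sum_congr rfl fun a _ => ?_
  rw [Finset.sum_product]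
  refine Finset.sum_congr rfl fun b _ => ?_
  have hpt : ∀ c : ℕ,
      (if 2 ≤ a ∧ 3 ≤ b ∧ 2 ≤ c ∧ a + b + c = e + 6 then f a b c else 0)
      = if c = e+6-a-b then
          (if 2 ≤ a ∧ 3 ≤ b ∧ 2 ≤ c ∧ a + b + c = e + 6 then f a b c else 0) else 0 := by
    intro c
    by_cases hc : c = e+6-a-b
    · rw [if_pos hc]
    · rw [if_neg hc, if_neg]
      rintro ⟨-, -, -, h4⟩
      omega
  rw [Finset.sum_congr rfl fun c _ => hpt c, Finset.sum_ite_eq' (range (e+7)) (e+6-a-b)]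
  rw [if_pos (by rw [Finset.mem_range]; omega)]
  by_cases h : 2 ≤ a ∧ 3 ≤ b ∧ a + b ≤ e + 4
  · rw [if_pos h, if_pos ⟨h.1, h.2.1, by omega, by omega⟩]
  · rw [if_neg h, if_neg]
    rintro ⟨h1, h2, h3, h4⟩
    exact h ⟨h1, h2, by omega⟩

lemma reduce2 (e : ℕ) (f : ℕ → ℕ → ℚ) :
    ∑ a ∈ range (e+7), ∑ b ∈ range (e+7),
        (if 2 ≤ a ∧ 3 ≤ b ∧ a + b ≤ e + 4 then f a b else 0)
    = ∑ i ∈ range e, ∑ j ∈ range (e-i), f (i+2) (j+3) := by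
  rw [show e+7 = (e+5)+1+1 by omega, Finset.sum_range_succ', Finset.sum_range_succ']
  simp only [show ¬ (2 ≤ 0+1) by omega, show ¬ (2 ≤ 0) by omega, false_and, if_false,
    Finset.sum_const_zero, add_zero]
  have hinner : ∀ i : ℕ, ∑ b ∈ range ((e+5)+1+1), (if 2 ≤ i+1+1 ∧ 3 ≤ b ∧ i+1+1 + b ≤ e + 4 then f (i+1+1) b else 0)
      = ∑ j ∈ range (e - i), f (i+2) (j+3) := by
    intro i
    rw [show (e+5)+1+1 = (e+4)+1+1+1 by omega, Finset.sum_range_succ', Finset.sum_range_succ',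
      Finset.sum_range_succ']
    simp only [show ¬ (3 ≤ 0) by omega, show ¬ (3 ≤ 0+1) by omega, show ¬ (3 ≤ 0+1+1) by omega,
      false_and, and_false, if_false, add_zero]
    have hcond : ∀ j : ℕ, (if 2 ≤ i+1+1 ∧ 3 ≤ j+1+1+1 ∧ i+1+1 + (j+1+1+1) ≤ e + 4 then f (i+1+1) (j+1+1+1) else 0)
        = if j ∈ range (e - i) then f (i+2) (j+3) else 0 := by
      intro j
      by_cases h : j < e - i
      · rw [if_pos (Finset.mem_range.mpr h), if_pos (by omega)]
      · rw [if_neg (fun hm => h (Finset.mem_range.mp hm)), if_neg (by omega)]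
    rw [Finset.sum_congr rfl fun j _ => hcond j, Finset.sum_ite_mem,
      Finset.inter_eq_right.mpr (Finset.range_subset_range.mpr (by omega))]
  rw [Finset.sum_congr rfl fun i _ => hinner i]
  exact (Finset.sum_subset (Finset.range_subset_range.mpr (show e ≤ e+5 by omega))
    (fun x _ hnx => by
      rw [Finset.mem_range] at hnx
      rw [show e - x = 0 by omega, Finset.range_zero, Finset.sum_empty])).symm

lemma reduceAll (e : ℕ) (f : ℕ → ℕ → ℕ → ℚ) :
    ∑ x ∈ (Finset.range (e + 7) ×ˢ Finset.range (e + 7) ×ˢ Finset.range (e + 7)).filter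
        (fun x => 2 ≤ x.1 ∧ 3 ≤ x.2.1 ∧ 2 ≤ x.2.2 ∧ x.1 + x.2.1 + x.2.2 = e + 6),
      f x.1 x.2.1 x.2.2
    = ∑ i ∈ range e, ∑ j ∈ range (e-i), f (i+2) (j+3) (e+6-(i+2)-(j+3)) :=
  (reduce3 e f).trans (reduce2 e (fun a b => f a b (e+6-a-b)))

lemma sumDall (e : ℕ) :
    ∑ i ∈ range e, ∑ j ∈ range (e-i),
        ((((e+6).choose (i+2) : ℕ) : ℚ) * (((e+4-i).choose (j+3) : ℕ) : ℚ)
          - (e+6) * (((e+5).choose (i+2) : ℕ) : ℚ)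
          - (e+6) * (((e+5).choose (i+j+4) : ℕ) : ℚ)
          + (e+6) * (e+5))
    = (729*3^e + (-1008 - 184*(e:ℚ) - 8*(e:ℚ)^2)*2^e
        + (279 + 124*(e:ℚ) + 19*(e:ℚ)^2 + (e:ℚ)^3))
      - ((e:ℚ)+6) * ((16*(e:ℚ) - 16)*2^e + 16 - (e:ℚ)/2 - (e:ℚ)^2/2)
      - ((e:ℚ)+6) * ((16*(e:ℚ) - 16)*2^e + 16 - (e:ℚ)/2 - (e:ℚ)^2/2)
      + ((e:ℚ)+6) * (((e:ℚ)+5) * ((e:ℚ)*((e:ℚ)+1)/2)) := by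
  simp only [Finset.sum_sub_distrib, Finset.sum_add_distrib]
  have hx : ∑ i ∈ range e, ∑ j ∈ range (e-i), ((e:ℚ)+6) * (((e+5).choose (i+2) : ℕ) : ℚ)
      = ((e:ℚ)+6) * ∑ i ∈ range e, ((e-i:ℕ):ℚ) * (((e+5).choose (i+2) : ℕ) : ℚ) := by
    rw [Finset.mul_sum]
    refine Finset.sum_congr rfl fun i _ => ?_
    rw [Finset.sum_const, Finset.card_range, nsmul_eq_mul]
    ring
  have hy : ∑ i ∈ range e, ∑ j ∈ range (e-i), ((e:ℚ)+6) * (((e+5).choose (i+j+4) : ℕ) : ℚ)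
      = ((e:ℚ)+6) * ∑ s ∈ range e, ((s:ℚ)+1) * (((e+5).choose (s+4) : ℕ) : ℚ) := by
    simp only [← Finset.mul_sum]
    rw [triangle_sum (fun s => (((e+5).choose (s+4) : ℕ) : ℚ)) e]
  have hz : ∑ i ∈ range e, ∑ j ∈ range (e-i), (((e:ℚ)+6) * ((e:ℚ)+5))
      = ((e:ℚ)+6) * (((e:ℚ)+5) * ∑ i ∈ range e, ((e-i:ℕ):ℚ)) := by
    simp only [Finset.sum_const, Finset.card_range, nsmul_eq_mul]
    rw [Finset.mul_sum, Finset.mul_sum]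
    refine Finset.sum_congr rfl fun i _ => ?_
    ring
  rw [hx, hy, hz, sumD1, sumD2, sumD3, S5]

/-- The partial sum, over triples `(a, b, c)` with `a, c ≥ 2`, `b ≥ 3` and
`a + b + c = d + 3`, of the determinant contributions to `p_{d+3,d}`. -/
theorem partial_sum_b_ne_two (d : ℕ) (hd : 3 ≤ d) :
    ∑ x ∈ (Finset.range (d + 4) ×ˢ Finset.range (d + 4) ×ˢ Finset.range (d + 4)).filter
        (fun x => 2 ≤ x.1 ∧ 3 ≤ x.2.1 ∧ 2 ≤ x.2.2 ∧ x.1 + x.2.1 + x.2.2 = d + 3),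
      ((d + 3).factorial : ℚ) *
        Matrix.det !![(1 : ℚ) / (Nat.factorial x.1 : ℚ),
            (1 : ℚ) / (Nat.factorial (x.1 + x.2.1 - 1) : ℚ),
            (1 : ℚ) / (Nat.factorial (d + 1) : ℚ);
          1, (1 : ℚ) / (Nat.factorial x.2.1 : ℚ),
            (1 : ℚ) / (Nat.factorial (x.2.1 + x.2.2 - 1) : ℚ);
          0, 1, (1 : ℚ) / (Nat.factorial x.2.2 : ℚ)] =
      3 ^ (d + 3) - (5 * (d : ℚ) ^ 2 + 13 * (d : ℚ) + 18) * 2 ^ d +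
        ((1 / 2) * (d : ℚ) ^ 4 + 2 * (d : ℚ) ^ 3 + (3 / 2) * (d : ℚ) ^ 2 -
          4 * (d : ℚ) - 9) := by
  obtain ⟨e, rfl⟩ : ∃ e, d = e + 3 := ⟨d - 3, by omega⟩
  clear hd
  refine ((reduceAll e (fun a b c =>
    ((e+6).factorial : ℚ) *
      Matrix.det !![(1 : ℚ) / (Nat.factorial a : ℚ),
          (1 : ℚ) / (Nat.factorial (a + b - 1) : ℚ),
          (1 : ℚ) / (Nat.factorial (e + 4) : ℚ);
        1, (1 : ℚ) / (Nat.factorial b : ℚ),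
          (1 : ℚ) / (Nat.factorial (b + c - 1) : ℚ);
        0, 1, (1 : ℚ) / (Nat.factorial c : ℚ)])).trans ?_)
  refine (Finset.sum_congr rfl fun i hi => Finset.sum_congr rfl fun j hj =>
    key e i j (by rw [Finset.mem_range] at hi hj; omega)).trans ?_
  rw [sumDall]
  push_cast
  ring
end

section
/- For every d ≥ 4, Σ_{a=2}^{d-2} Σ_{c=2}^{d-a} multinomial(d+3; a, d+3−a−c, c) = 3^{d+3} − (d+11)(d+6)·2^d + (d³ + 10d² + 37d + 51), where multinomial(d+3; a, b, c) = (d+3)!/(a!·b!·c!). -/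
open Finset

lemma tri_symm (n a j : ℕ) (h : a + j ≤ n) :
    n.choose a * (n - a).choose j = n.choose j * (n - j).choose a := by
  have h1 := Nat.choose_mul (n := n) (k := a + j) (s := a) (Nat.le_add_right a j)
  have h2 := Nat.choose_mul (n := n) (k := a + j) (s := j) (Nat.le_add_left j a)
  have h3 := Nat.choose_symm (Nat.le_add_left j a)
  simp only [Nat.add_sub_cancel] at h3
  simp only [Nat.add_sub_cancel_left, Nat.add_sub_cancel] at h1 h2
  rw [← h1, h3, h2]

lemma sumB (n j : ℕ) (hj : j ≤ n) :
    ∑ a ∈ range (n + 1), ((n.choose a : ℚ) * ((n - a).choose j : ℚ)) =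
      (n.choose j : ℚ) * 2 ^ (n - j) := by
  have hsub : range (n - j + 1) ⊆ range (n + 1) := by
    apply range_subset_range.2; omega
  rw [← Finset.sum_subset hsub (by
    intro a ha hna
    simp only [mem_range] at ha hna
    have : n - a < j := by omega
    rw [Nat.choose_eq_zero_of_lt this]
    simp)]
  have : ∀ a ∈ range (n - j + 1),
      (n.choose a : ℚ) * ((n - a).choose j : ℚ) = (n.choose j : ℚ) * ((n - j).choose a : ℚ) := by
    intro a ha
    simp only [mem_range] at ha
    exact_mod_cast congrArg (Nat.cast (R := ℚ)) (tri_symm n a j (by omega))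
  rw [Finset.sum_congr rfl this, ← Finset.mul_sum]
  congr 1
  exact_mod_cast congrArg (Nat.cast (R := ℚ)) (Nat.sum_range_choose (n - j))

lemma sumA (n : ℕ) :
    ∑ a ∈ range (n + 1), ((n.choose a : ℚ) * 2 ^ (n - a)) = 3 ^ n := by
  have h := add_pow (1 : ℚ) 2 n
  norm_num at h
  rw [h]
  exact Finset.sum_congr rfl fun i _ => by ring

lemma sumC (n : ℕ) : ∑ a ∈ range (n + 1), ((n.choose a : ℚ)) = 2 ^ n := by
  exact_mod_cast congrArg (Nat.cast (R := ℚ)) (Nat.sum_range_choose n)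

lemma cast3 (n : ℕ) : (((n + 3).choose 3 : ℕ) : ℚ) =
    ((n : ℚ) + 3) * ((n : ℚ) + 2) * ((n : ℚ) + 1) / 6 := by
  rw [Nat.cast_choose ℚ (by omega : 3 ≤ n + 3)]
  rw [show n + 3 - 3 = n by omega]
  rw [show (n + 3) = (n + 2) + 1 by omega, Nat.factorial_succ,
    show (n + 2) = (n + 1) + 1 by omega, Nat.factorial_succ, Nat.factorial_succ]
  have hn : ((n.factorial : ℚ)) ≠ 0 := by exact_mod_cast n.factorial_ne_zero
  push_cast
  rw [show (Nat.factorial 3 : ℚ) = 6 by norm_num [Nat.factorial]]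
  field_simp
  ring

lemma term_eq (n a c : ℕ) (h : a + c ≤ n) :
    ((n.factorial : ℚ)) / ((a.factorial : ℚ) * ((n - a - c).factorial : ℚ) * (c.factorial : ℚ)) =
      (n.choose a : ℚ) * ((n - a).choose c : ℚ) := by
  rw [Nat.cast_choose ℚ (by omega : a ≤ n), Nat.cast_choose ℚ (by omega : c ≤ n - a)]
  have e1 : (n - a) - c = n - a - c := rfl
  rw [e1]
  have f1 : ((a.factorial : ℚ)) ≠ 0 := by exact_mod_cast a.factorial_ne_zero
  have f2 : ((c.factorial : ℚ)) ≠ 0 := by exact_mod_cast c.factorial_ne_zero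
  have f3 : (((n - a - c).factorial : ℚ)) ≠ 0 := by exact_mod_cast (n - a - c).factorial_ne_zero
  have f4 : (((n - a).factorial : ℚ)) ≠ 0 := by exact_mod_cast (n - a).factorial_ne_zero
  field_simp

lemma my_inner_sum (k : ℕ) :
    ∑ c ∈ Finset.Icc 2 (k + 2), (((k + 5).choose c : ℕ) : ℚ) =
      2 ^ (k + 5) - 2 - 2 * ((k : ℚ) + 5) - (((k + 5).choose 2 : ℕ) : ℚ) := by
  rw [← Finset.Ico_add_one_right_eq_Icc, Finset.sum_Ico_eq_sub _ (by omega : 2 ≤ k + 2 + 1)]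
  have big := sumC (k + 5)
  rw [show k + 5 + 1 = k + 6 by omega] at big
  rw [Finset.sum_range_succ, Finset.sum_range_succ, Finset.sum_range_succ] at big
  have c1 : (k + 5).choose (k + 5) = 1 := Nat.choose_self _
  have c2 : (k + 5).choose (k + 4) = k + 5 := by
    rw [show k + 4 = k + 5 - 1 by omega, Nat.choose_symm (by omega), Nat.choose_one_right]
  have c3 : (k + 5).choose (k + 3) = (k + 5).choose 2 := by
    rw [show k + 3 = k + 5 - 2 by omega, Nat.choose_symm (by omega)]
  rw [c1, c2, c3] at big
  have small : ∑ c ∈ range 2, (((k + 5).choose c : ℕ) : ℚ) = 1 + ((k : ℚ) + 5) := by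
    simp [Finset.sum_range_succ, Nat.choose_one_right]
  rw [show k + 2 + 1 = k + 3 by omega, small]
  push_cast at big ⊢
  linarith

/-- A double-sum identity for trinomial coefficients used in the computation of
`p_{d+3,d}`. -/
theorem double_sum_multinomial (d : ℕ) (hd : 4 ≤ d) :
    ∑ a ∈ Finset.Icc 2 (d - 2), ∑ c ∈ Finset.Icc 2 (d - a),
      ((d + 3).factorial : ℚ) /
        ((Nat.factorial a : ℚ) * (Nat.factorial (d + 3 - a - c) : ℚ) *
          (Nat.factorial c : ℚ)) =
      3 ^ (d + 3) - ((d : ℚ) + 11) * ((d : ℚ) + 6) * 2 ^ d +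
        ((d : ℚ) ^ 3 + 10 * (d : ℚ) ^ 2 + 37 * (d : ℚ) + 51) := by
  obtain ⟨e, rfl⟩ : ∃ e, d = e + 4 := ⟨d - 4, by omega⟩
  rw [show e + 4 + 3 = e + 7 by omega, show e + 4 - 2 = e + 2 by omega]
  have hL : ∑ a ∈ Finset.Icc 2 (e + 2), ∑ c ∈ Finset.Icc 2 (e + 4 - a),
      ((e + 7).factorial : ℚ) /
        ((Nat.factorial a : ℚ) * (Nat.factorial (e + 7 - a - c) : ℚ) *
          (Nat.factorial c : ℚ)) =
      ∑ a ∈ Finset.Icc 2 (e + 2), (((e + 7).choose a : ℕ) : ℚ) *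
        (2 ^ (e + 7 - a) - 2 - 2 * ((e + 7 - a : ℕ) : ℚ) -
          (((e + 7 - a).choose 2 : ℕ) : ℚ)) := by
    refine Finset.sum_congr rfl ?_
    intro a ha
    rw [Finset.mem_Icc] at ha
    have hstep : ∀ c ∈ Finset.Icc 2 (e + 4 - a),
        ((e + 7).factorial : ℚ) /
          ((Nat.factorial a : ℚ) * (Nat.factorial (e + 7 - a - c) : ℚ) *
            (Nat.factorial c : ℚ)) =
        (((e + 7).choose a : ℕ) : ℚ) * (((e + 7 - a).choose c : ℕ) : ℚ) := by
      intro c hc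
      rw [Finset.mem_Icc] at hc
      exact term_eq (e + 7) a c (by omega)
    rw [Finset.sum_congr rfl hstep, ← Finset.mul_sum,
      show e + 4 - a = (e + 2 - a) + 2 by omega,
      show e + 7 - a = (e + 2 - a) + 5 by omega,
      my_inner_sum (e + 2 - a)]
    push_cast
    ring
  rw [hL, ← Finset.Ico_add_one_right_eq_Icc, Finset.sum_Ico_eq_sub _ (by omega : 2 ≤ e + 2 + 1),
    show e + 2 + 1 = e + 3 by omega]
  set B : ℕ → ℚ := fun a => (((e + 7).choose a : ℕ) : ℚ) *
    (2 ^ (e + 7 - a) - 2 - 2 * ((e + 7 - a : ℕ) : ℚ) -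
      (((e + 7 - a).choose 2 : ℕ) : ℚ)) with hB
  -- full-range sum
  have hbig : ∑ a ∈ Finset.range (e + 8), B a =
      3 ^ (e + 7) - 2 * 2 ^ (e + 7) - 2 * (((e + 7 : ℕ)) : ℚ) * 2 ^ (e + 6) -
        (((e + 7).choose 2 : ℕ) : ℚ) * 2 ^ (e + 5) := by
    have expand : ∀ a ∈ Finset.range (e + 8), B a =
        (((e + 7).choose a : ℕ) : ℚ) * 2 ^ (e + 7 - a)
          - 2 * (((e + 7).choose a : ℕ) : ℚ)
          - 2 * ((((e + 7).choose a : ℕ) : ℚ) * (((e + 7 - a).choose 1 : ℕ) : ℚ))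
          - (((e + 7).choose a : ℕ) : ℚ) * (((e + 7 - a).choose 2 : ℕ) : ℚ) := by
      intro a _
      rw [hB]
      simp only [Nat.choose_one_right]
      ring
    rw [Finset.sum_congr rfl expand]
    rw [Finset.sum_sub_distrib, Finset.sum_sub_distrib, Finset.sum_sub_distrib,
      ← Finset.mul_sum, ← Finset.mul_sum]
    rw [show e + 8 = e + 7 + 1 by omega, sumA (e + 7), sumC (e + 7),
      sumB (e + 7) 1 (by omega), sumB (e + 7) 2 (by omega),
      show e + 7 - 1 = e + 6 by omega, show e + 7 - 2 = e + 5 by omega,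
      Nat.choose_one_right]
    ring
  -- split off the five top terms
  have hsplit : ∑ a ∈ Finset.range (e + 8), B a =
      ∑ a ∈ Finset.range (e + 3), B a
        + B (e + 3) + B (e + 4) + B (e + 5) + B (e + 6) + B (e + 7) := by
    rw [show e + 8 = (e + 3) + 1 + 1 + 1 + 1 + 1 by omega,
      Finset.sum_range_succ, Finset.sum_range_succ, Finset.sum_range_succ,
      Finset.sum_range_succ, Finset.sum_range_succ]
  -- boundary values
  have hB3 : B (e + 3) = 0 := by
    rw [hB]; simp only
    rw [show e + 7 - (e + 3) = 4 by omega]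
    norm_num [Nat.choose]
  have hB4 : B (e + 4) = -3 * (((e + 7).choose 3 : ℕ) : ℚ) := by
    rw [hB]; simp only
    rw [show e + 7 - (e + 4) = 3 by omega,
      show e + 4 = e + 7 - 3 by omega, Nat.choose_symm (by omega)]
    norm_num [Nat.choose]
    ring
  have hB5 : B (e + 5) = -3 * (((e + 7).choose 2 : ℕ) : ℚ) := by
    rw [hB]; simp only
    rw [show e + 7 - (e + 5) = 2 by omega,
      show e + 5 = e + 7 - 2 by omega, Nat.choose_symm (by omega)]
    norm_num [Nat.choose]
    ring
  have hB6 : B (e + 6) = -2 * (((e + 7 : ℕ)) : ℚ) := by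
    rw [hB]; simp only
    rw [show e + 7 - (e + 6) = 1 by omega,
      show e + 6 = e + 7 - 1 by omega, Nat.choose_symm (by omega),
      Nat.choose_one_right, show (1:ℕ).choose 2 = 0 from rfl]
    push_cast
    ring
  have hB7 : B (e + 7) = -1 := by
    rw [hB]; simp only
    rw [show e + 7 - (e + 7) = 0 by omega, Nat.choose_self]
    norm_num
  have h2 : ∑ a ∈ Finset.range 2, B a =
      (2 ^ (e + 7) - 2 - 2 * (((e + 7 : ℕ)) : ℚ) - (((e + 7).choose 2 : ℕ) : ℚ))
      + (((e + 7 : ℕ)) : ℚ) *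
        (2 ^ (e + 6) - 2 - 2 * (((e + 6 : ℕ)) : ℚ) - (((e + 6).choose 2 : ℕ) : ℚ)) := by
    rw [Finset.sum_range_succ, Finset.sum_range_one, hB]; simp only
    rw [Nat.choose_zero_right, Nat.choose_one_right,
      show e + 7 - 0 = e + 7 by omega, show e + 7 - 1 = e + 6 by omega]
    push_cast
    ring
  have hmain : ∑ a ∈ Finset.range (e + 3), B a =
      3 ^ (e + 7) - 2 * 2 ^ (e + 7) - 2 * (((e + 7 : ℕ)) : ℚ) * 2 ^ (e + 6) -
        (((e + 7).choose 2 : ℕ) : ℚ) * 2 ^ (e + 5)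
      + 3 * (((e + 7).choose 3 : ℕ) : ℚ) + 3 * (((e + 7).choose 2 : ℕ) : ℚ)
      + 2 * (((e + 7 : ℕ)) : ℚ) + 1 := by
    have := hsplit
    rw [hbig, hB3, hB4, hB5, hB6, hB7] at this
    linarith
  rw [hmain, h2]
  have hc2a : (((e + 7).choose 2 : ℕ) : ℚ) = ((e : ℚ) + 7) * ((e : ℚ) + 6) / 2 := by
    rw [Nat.cast_choose_two]; push_cast; ring
  have hc2b : (((e + 6).choose 2 : ℕ) : ℚ) = ((e : ℚ) + 6) * ((e : ℚ) + 5) / 2 := by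
    rw [Nat.cast_choose_two]; push_cast; ring
  have hc3 : (((e + 7).choose 3 : ℕ) : ℚ) =
      ((e : ℚ) + 7) * ((e : ℚ) + 6) * ((e : ℚ) + 5) / 6 := by
    rw [show e + 7 = e + 4 + 3 by omega, cast3]
    push_cast; ring
  rw [hc2a, hc2b, hc3]
  push_cast
  ring
end

section
/- For every d ≥ 4, Σ_{a=2}^{d-2} Σ_{c=2}^{d-a} (d+3)·binomial(d+2, a) = (d² − d − 12)·2^{d+1} − ( (1/2)d³ − d² − (41/2)d − 39 ). -/
lemma sum_mul_choose_aux (n : ℕ) :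
    ∑ i ∈ Finset.range (n + 2), i * (n + 1).choose i = (n + 1) * 2 ^ n := by
  rw [Finset.sum_range_succ']
  simp only [Nat.zero_mul, add_zero]
  have h : ∀ i, (i + 1) * (n + 1).choose (i + 1) = (n + 1) * n.choose i := by
    intro i
    rw [mul_comm]
    exact (Nat.add_one_mul_choose_eq n i).symm
  rw [Finset.sum_congr rfl fun i _ => h i, ← Finset.mul_sum, Nat.sum_range_choose]

/-- A double-sum identity for binomial coefficients used in the computation of
`p_{d+3,d}`. -/
theorem double_sum_binomial (d : ℕ) (hd : 4 ≤ d) :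
    ∑ a ∈ Finset.Icc 2 (d - 2), ∑ c ∈ Finset.Icc 2 (d - a),
      ((d : ℚ) + 3) * ((d + 2).choose a : ℚ) =
      ((d : ℚ) ^ 2 - (d : ℚ) - 12) * 2 ^ (d + 1) -
        ((1 / 2) * (d : ℚ) ^ 3 - (d : ℚ) ^ 2 - (41 / 2) * (d : ℚ) - 39) := by
  set F : ℕ → ℚ := fun a => ((d : ℚ) - a - 1) * ((d + 2).choose a : ℚ) with hFdef
  have hF : ∀ a ∈ Finset.Icc 2 (d - 2),
      (∑ c ∈ Finset.Icc 2 (d - a), ((d : ℚ) + 3) * ((d + 2).choose a : ℚ)) =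
      ((d : ℚ) + 3) * F a := by
    intro a ha
    rw [Finset.mem_Icc] at ha
    rw [Finset.sum_const, Nat.card_Icc]
    have h1 : d - a + 1 - 2 = d - (a + 1) := by omega
    rw [h1, nsmul_eq_mul, Nat.cast_sub (by omega), hFdef]
    push_cast
    ring
  rw [Finset.sum_congr rfl hF, ← Finset.mul_sum]
  -- extend the sum to the full range
  have hsub : Finset.Icc 2 (d - 2) ⊆ Finset.range (d + 3) := by
    intro x hx
    simp only [Finset.mem_Icc, Finset.mem_range] at *
    omega
  have hsdiff := Finset.sum_sdiff (f := F) hsub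
  have hset : Finset.range (d + 3) \ Finset.Icc 2 (d - 2)
      = {0, 1, d - 1, d, d + 1, d + 2} := by
    ext x
    simp only [Finset.mem_sdiff, Finset.mem_range, Finset.mem_Icc, Finset.mem_insert,
      Finset.mem_singleton]
    omega
  have hexp : ∑ a ∈ ({0, 1, d - 1, d, d + 1, d + 2} : Finset ℕ), F a
      = F 0 + F 1 + F (d - 1) + F d + F (d + 1) + F (d + 2) := by
    rw [Finset.sum_insert (by simp only [Finset.mem_insert, Finset.mem_singleton]; omega), Finset.sum_insert (by simp only [Finset.mem_insert, Finset.mem_singleton]; omega),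
      Finset.sum_insert (by simp only [Finset.mem_insert, Finset.mem_singleton]; omega), Finset.sum_insert (by simp only [Finset.mem_insert, Finset.mem_singleton]; omega),
      Finset.sum_insert (by simp only [Finset.mem_insert, Finset.mem_singleton]; omega), Finset.sum_singleton]
    ring
  -- full range sum
  have h0 : ∑ a ∈ Finset.range (d + 3), ((d + 2).choose a : ℚ) = 2 ^ (d + 2) := by
    exact_mod_cast congrArg (Nat.cast : ℕ → ℚ) (Nat.sum_range_choose (d + 2))
  have h1 : ∑ a ∈ Finset.range (d + 3), (a : ℚ) * ((d + 2).choose a : ℚ)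
      = ((d : ℚ) + 2) * 2 ^ (d + 1) := by
    have := congrArg (Nat.cast : ℕ → ℚ) (sum_mul_choose_aux (d + 1))
    push_cast at this
    convert this using 2 <;> push_cast <;> ring
  have hrange : ∑ a ∈ Finset.range (d + 3), F a
      = ((d : ℚ) - 1) * 2 ^ (d + 2) - ((d : ℚ) + 2) * 2 ^ (d + 1) := by
    have heq : ∀ a ∈ Finset.range (d + 3), F a =
        ((d : ℚ) - 1) * ((d + 2).choose a : ℚ) - (a : ℚ) * ((d + 2).choose a : ℚ) := by
      intro a _
      simp only [hFdef]
      ring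
    rw [Finset.sum_congr rfl heq, Finset.sum_sub_distrib, ← Finset.mul_sum, h0, h1]
  -- boundary values
  have hF0 : F 0 = (d : ℚ) - 1 := by simp [hFdef]
  have hF1 : F 1 = ((d : ℚ) - 2) * ((d : ℚ) + 2) := by
    simp only [hFdef, Nat.choose_one_right]
    push_cast
    ring
  have hFd1 : F (d - 1) = 0 := by
    have h : ((d - 1 : ℕ) : ℚ) = (d : ℚ) - 1 := by
      rw [Nat.cast_sub (by omega)]; norm_num
    simp only [hFdef, h]
    ring
  have hFd : F d = -(((d : ℚ) + 2) * ((d : ℚ) + 1) / 2) := by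
    have hc : (d + 2).choose d = (d + 2).choose 2 := by
      have := Nat.choose_symm (n := d + 2) (k := 2) (by omega)
      simpa using this
    simp only [hFdef, hc, Nat.cast_choose_two]
    push_cast
    ring
  have hFd2 : F (d + 1) = -2 * ((d : ℚ) + 2) := by
    have hc : (d + 2).choose (d + 1) = d + 2 := by
      have := Nat.choose_symm (n := d + 2) (k := 1) (by omega)
      simpa using this
    simp only [hFdef, hc]
    push_cast
    ring
  have hFd3 : F (d + 2) = -3 := by
    simp only [hFdef, Nat.choose_self]
    push_cast
    ring
  rw [hset, hexp] at hsdiff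
  have hIcc : ∑ a ∈ Finset.Icc 2 (d - 2), F a
      = (((d : ℚ) - 1) * 2 ^ (d + 2) - ((d : ℚ) + 2) * 2 ^ (d + 1))
        - (F 0 + F 1 + F (d - 1) + F d + F (d + 1) + F (d + 2)) := by
    rw [← hrange]
    linarith [hsdiff]
  rw [hIcc, hF0, hF1, hFd1, hFd, hFd2, hFd3, pow_succ]
  ring
end
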